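/- arXiv:2407.15976 — 4 statements merged into one kernel-verified Lean document; each statement's English description precedes it below -/
import Mathlib

section
/- Let h : D → ℝ be a harmonic function on the unit disc D ⊂ ℝ² with h < 0 on D. Then |∇h(0)| ≤ 2|h(0)| (the Schwarz lemma for negative harmonic functions). -/
noncomputable section

open Metric

/-- First standard basis vector of `ℝ²`. -/
def e₁ : EuclideanSpace ℝ (Fin 2) := EuclideanSpace.single 0 1

/-- Second standard basis vector of `ℝ²`. -/
def e₂ : EuclideanSpace ℝ (Fin 2) := EuclideanSpace.single 1 1

/-- Laplacian (within a set `s`) of a map `f : ℝ² → F` at `z`: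
`Δf(z) = ∂²f/∂x²(z) + ∂²f/∂y²(z)`. -/
def lapW {F : Type*} [NormedAddCommGroup F] [NormedSpace ℝ F]
    (s : Set (EuclideanSpace ℝ (Fin 2))) (f : EuclideanSpace ℝ (Fin 2) → F)
    (z : EuclideanSpace ℝ (Fin 2)) : F :=
  iteratedFDerivWithin ℝ 2 f s z ![e₁, e₁] + iteratedFDerivWithin ℝ 2 f s z ![e₂, e₂]

/-- Euclidean Hessian of `ρ : ℝⁿ → ℝ` at `p`, as a bilinear form. -/
def hess {n : ℕ} (ρ : EuclideanSpace ℝ (Fin n) → ℝ) (p v w : EuclideanSpace ℝ (Fin n)) : ℝ :=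
  iteratedFDeriv ℝ 2 ρ p ![v, w]

/-!
Transported to `ℂ` by the linear isometry `ℂ ≃ ℝ²`, the harmonic function `h` is the real part of a
holomorphic `F` on the disc with `‖∇h(0)‖ = ‖F'(0)‖`. As `F` maps the disc into the left
half-plane, the Cayley map `w ↦ (w - F 0) / (w + conj (F 0))` sends it into the unit disc with
`0 ↦ 0`, and the Schwarz lemma for the composite gives `‖F'(0)‖ ≤ 2 |Re F(0)|`.
-/

open Set Complex ComplexConjugate InnerProductSpace Laplacian

section

variable {E E' F : Type*} [NormedAddCommGroup E] [InnerProductSpace ℝ E] [FiniteDimensional ℝ E]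
  [NormedAddCommGroup E'] [InnerProductSpace ℝ E'] [FiniteDimensional ℝ E']
  [NormedAddCommGroup F] [NormedSpace ℝ F]

theorem InnerProductSpace.laplacian_comp_linearIsometryEquiv (e : E ≃ₗᵢ[ℝ] E') (f : E' → F)
    (x : E) : Δ (f ∘ e) x = Δ f (e x) := by
  have hcomp := e.toContinuousLinearEquiv.iteratedFDerivWithin_comp_right f uniqueDiffOn_univ
    (mem_univ (e x)) 2
  simp only [preimage_univ, iteratedFDerivWithin_univ] at hcomp
  rw [laplacian_eq_iteratedFDeriv_orthonormalBasis _ (stdOrthonormalBasis ℝ E),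
    laplacian_eq_iteratedFDeriv_orthonormalBasis f ((stdOrthonormalBasis ℝ E).map e)]
  refine Finset.sum_congr rfl fun i _ => ?_
  rw [show f ∘ e = f ∘ e.toContinuousLinearEquiv from rfl, hcomp]
  simp only [ContinuousMultilinearMap.compContinuousLinearMap_apply]
  congr 1
  ext j
  fin_cases j <;> rfl

theorem InnerProductSpace.HarmonicAt.comp_linearIsometryEquiv {f : E' → F} (e : E ≃ₗᵢ[ℝ] E')
    {x : E} (hf : HarmonicAt f (e x)) : HarmonicAt (f ∘ e) x := by
  refine ⟨hf.1.comp x e.contDiff.contDiffAt, ?_⟩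
  filter_upwards [e.continuous.continuousAt.eventually hf.2] with y hy
  rw [laplacian_comp_linearIsometryEquiv]
  exact hy

theorem lapW_eq_laplacian {s : Set (EuclideanSpace ℝ (Fin 2))}
    {f : EuclideanSpace ℝ (Fin 2) → F} {x : EuclideanSpace ℝ (Fin 2)} (hs : IsOpen s)
    (hx : x ∈ s) : lapW s f x = Δ f x := by
  rw [lapW, iteratedFDerivWithin_of_isOpen 2 hs hx,
    laplacian_eq_iteratedFDeriv_orthonormalBasis f (EuclideanSpace.basisFun (Fin 2) ℝ)]
  simp [e₁, e₂]

theorem harmonicOnNhd_of_lapW_eq_zero {s : Set (EuclideanSpace ℝ (Fin 2))}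
    {f : EuclideanSpace ℝ (Fin 2) → F} (hs : IsOpen s) (hf : ContDiffOn ℝ 2 f s)
    (hΔ : ∀ x ∈ s, lapW s f x = 0) : HarmonicOnNhd f s := by
  intro x hx
  refine ⟨hf.contDiffAt (hs.mem_nhds hx), ?_⟩
  filter_upwards [hs.mem_nhds hx] with y hy
  rw [← lapW_eq_laplacian hs hy]
  exact hΔ y hy

end

namespace Complex

theorem norm_sub_lt_norm_add_conj_of_re_neg {w a : ℂ} (hw : w.re < 0) (ha : a.re < 0) :
    ‖w - a‖ < ‖w + conj a‖ := by
  rw [← sq_lt_sq₀ (norm_nonneg _) (norm_nonneg _), Complex.sq_norm, Complex.sq_norm,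
    normSq_apply, normSq_apply]
  simp only [sub_re, sub_im, add_re, add_im, conj_re, conj_im]
  nlinarith [mul_pos_of_neg_of_neg hw ha]

theorem norm_deriv_le_of_re_neg {F : ℂ → ℂ} {c : ℂ} {R : ℝ}
    (hd : DifferentiableOn ℂ F (ball c R)) (hre : ∀ z ∈ ball c R, (F z).re < 0) (hR : 0 < R) :
    ‖deriv F c‖ ≤ 2 * |(F c).re| / R := by
  have hc : c ∈ ball c R := mem_ball_self hR
  have hden : ∀ z ∈ ball c R, F z + conj (F c) ≠ 0 := fun z hz h0 => by
    simpa [h0] using (norm_sub_lt_norm_add_conj_of_re_neg (hre z hz) (hre c hc)).trans_le'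
      (norm_nonneg _)
  set φ : ℂ → ℂ := fun z => (F z - F c) / (F z + conj (F c))
  have hφd : DifferentiableOn ℂ φ (ball c R) :=
    (hd.sub_const _).div (hd.add_const _) hden
  have hφmaps : MapsTo φ (ball c R) (closedBall (φ c) 1) := fun z hz => by
    rw [mem_closedBall, dist_eq_norm]
    simp only [φ, sub_self, zero_div, sub_zero, norm_div]
    exact (div_lt_one (norm_pos_iff.2 (hden z hz))).2
      (norm_sub_lt_norm_add_conj_of_re_neg (hre z hz) (hre c hc)) |>.le
  have hre_ne : ((F c).re : ℂ) ≠ 0 := ofReal_ne_zero.2 (hre c hc).ne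
  have hφ' : deriv φ c = deriv F c / (2 * (F c).re) := by
    have hF' := (hd.differentiableAt (isOpen_ball.mem_nhds hc)).hasDerivAt
    rw [((hF'.sub_const (F c)).fun_div (hF'.add_const _) (hden c hc)).deriv, add_conj]
    field_simp
    push_cast
    ring
  have := norm_deriv_le_div_of_mapsTo_ball hφd hφmaps hR
  rw [hφ', norm_div, norm_mul, norm_real, Complex.norm_two, Real.norm_eq_abs,
    div_le_div_iff₀ (mul_pos two_pos (abs_pos.2 (hre c hc).ne)) hR] at this
  rw [le_div_iff₀ hR]
  linarith

theorem norm_fderiv_re {F : ℂ → ℂ} {z : ℂ} (hF : DifferentiableAt ℂ F z) :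
    ‖fderiv ℝ (fun w => (F w).re) z‖ = ‖deriv F z‖ := by
  have : fderiv ℝ (fun w => (F w).re) z = innerSL ℝ (conj (deriv F z)) := by
    rw [show (fun w => (F w).re) = reCLM ∘ F from rfl,
      fderiv_comp z reCLM.differentiableAt (hF.restrictScalars ℝ), reCLM.fderiv,
      hF.fderiv_restrictScalars ℝ]
    ext w
    simp [Complex.inner]
  rw [this, innerSL_apply_norm, norm_conj]

end Complex

/-- Schwarz lemma for negative harmonic functions: if `h` is harmonic and negative on the unit
disc `D ⊂ ℝ²`, then `|∇h(0)| ≤ 2|h(0)|`. -/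
theorem stmt2 (h : EuclideanSpace ℝ (Fin 2) → ℝ)
    (hsm : ContDiffOn ℝ 2 h (ball 0 1))
    (hharm : ∀ z ∈ ball (0 : EuclideanSpace ℝ (Fin 2)) 1, lapW (ball 0 1) h z = 0)
    (hneg : ∀ z ∈ ball (0 : EuclideanSpace ℝ (Fin 2)) 1, h z < 0) :
    ‖fderivWithin ℝ h (ball 0 1) 0‖ ≤ 2 * |h 0| := by
  let e : ℂ ≃ₗᵢ[ℝ] EuclideanSpace ℝ (Fin 2) := orthonormalBasisOneI.repr
  have he : ∀ z : ℂ, e z ∈ ball 0 1 ↔ z ∈ ball 0 1 := fun z => by simp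
  have h0 : (0 : ℂ) ∈ ball 0 1 := mem_ball_self one_pos
  have hharmD := harmonicOnNhd_of_lapW_eq_zero isOpen_ball hsm hharm
  have hharmC : HarmonicOnNhd (h ∘ e) (ball 0 1) := fun z hz =>
    (hharmD (e z) ((he z).2 hz)).comp_linearIsometryEquiv e
  obtain ⟨F, hFan, hFre⟩ := hharmC.exists_analyticOnNhd_ball_re_eq
  have hgrad : ‖fderivWithin ℝ h (ball 0 1) 0‖ = ‖deriv F 0‖ := by
    rw [fderivWithin_of_isOpen isOpen_ball (mem_ball_self one_pos), ← norm_fderiv_re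
      (hFan.differentiableOn.differentiableAt (isOpen_ball.mem_nhds h0)),
      (hFre.eventuallyEq_of_mem (isOpen_ball.mem_nhds h0)).fderiv_eq, ← norm_iteratedFDeriv_one,
      ← norm_iteratedFDeriv_one, e.norm_iteratedFDeriv_comp_right, map_zero]
  have hFneg : ∀ z ∈ ball (0 : ℂ) 1, (F z).re < 0 := fun z hz =>
    (hFre hz).trans_lt (hneg (e z) ((he z).2 hz))
  calc ‖fderivWithin ℝ h (ball 0 1) 0‖ ≤ 2 * |(F 0).re| / 1 :=
        hgrad ▸ norm_deriv_le_of_re_neg hFan.differentiableOn hFneg one_pos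
    _ = 2 * |h 0| := by simp [hFre h0]
end
end

section
/- Let u : D → ℝ be a C² function on the unit disc D ⊂ ℝ² with u < 0 on D, and suppose |Δu(ζ)| ≤ A·|u(0)| for all ζ ∈ D, for some constant A > 0. Then there is a constant C (depending only on A, not on u) such that |∇u(0)| ≤ C·|u(0)|. -/
/-!
For `χ ∈ {1, cos, sin}` let `c(r) = ∫₀^{2π} u(r e^{iθ}) χ(θ) dθ` and let `ℓ(r)` be the same
moment of `Δu`, so `|ℓ| ≤ 2πA|u(0)|`. Writing `Δ = ∂²_r + r⁻¹∂_r + r⁻²∂²_θ` and integrating by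
parts twice in `θ` (`χ'' = -n²χ`) gives the radial equation `r²c'' + rc' - n²c = r²ℓ`.

* `n = 0`: `(rc')' = rℓ`, so `c(1/2) = 2πu(0) + O(A|u(0)|)`.
* `n = 1`: the Wronskian `r²c' - rc` has derivative `r²ℓ`, which bounds `c''`; since
  `c'(0) = π ∂u(0)·e` with `e = e₁` resp. `e₂`, this gives `π|∂u(0)·e| ≤ 2|c(1/2)| + O(A|u(0)|)`.

As `u < 0` and `|χ| ≤ 1`, `|c(1/2)|` is at most minus the `n = 0` moment at `1/2`, hence at most
`2π|u(0)| + O(A|u(0)|)`. With `ℓ = 0` this is the Schwarz lemma for negative harmonic functions;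
the `ℓ` terms take the place of subtracting the Newtonian potential of `Δu`.
-/

noncomputable section

open Metric

open Real Set Function MeasureTheory intervalIntegral

namespace DiscLaplacian

theorem abs_sub_le_mul_pow_of_abs_deriv_le {f f' : ℝ → ℝ} {t K : ℝ} {m : ℕ} (ht : 0 ≤ t)
    (hf : ContinuousOn f (Icc 0 t)) (hf' : ∀ s ∈ Ioo 0 t, HasDerivAt f (f' s) s)
    (hbound : ∀ s ∈ Ioo 0 t, |f' s| ≤ K * s ^ m) : |f t - f 0| ≤ K * t ^ (m + 1) := by
  rcases ht.eq_or_lt with rfl | ht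
  · simp
  obtain ⟨s, hs, hslope⟩ := exists_hasDerivAt_eq_slope f f' ht hf hf'
  have hK : 0 ≤ K := nonneg_of_mul_nonneg_left ((abs_nonneg _).trans (hbound s hs))
    (pow_pos hs.1 m)
  rw [sub_zero, eq_div_iff ht.ne'] at hslope
  calc |f t - f 0| = |f' s| * t := by rw [← hslope, abs_mul, abs_of_pos ht]
    _ ≤ K * s ^ m * t := by gcongr; exact hbound s hs
    _ ≤ K * t ^ m * t := by gcongr; exact hs.1.le; exact hs.2.le
    _ = K * t ^ (m + 1) := by ring

theorem continuous_of_continuousOn_prod_univ {U : Set ℝ} {G : ℝ → ℝ → ℝ}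
    (hG : ContinuousOn (uncurry G) (U ×ˢ univ)) {r : ℝ} (hr : r ∈ U) : Continuous (G r) :=
  hG.comp_continuous (Continuous.prodMk_right r) fun _ => ⟨hr, trivial⟩

theorem hasDerivAt_intervalIntegral_of_continuousOn {U : Set ℝ} (hU : IsOpen U)
    {G G' : ℝ → ℝ → ℝ} {a b : ℝ}
    (hG : ContinuousOn (uncurry G) (U ×ˢ univ)) (hG' : ContinuousOn (uncurry G') (U ×ˢ univ))
    (hder : ∀ r ∈ U, ∀ θ, HasDerivAt (G · θ) (G' r θ) r) {r₀ : ℝ} (hr₀ : r₀ ∈ U) :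
    HasDerivAt (fun r => ∫ θ in a..b, G r θ) (∫ θ in a..b, G' r₀ θ) r₀ := by
  obtain ⟨ε, hε, hεU⟩ := nhds_basis_closedBall.mem_iff.mp (hU.mem_nhds hr₀)
  obtain ⟨C, hC⟩ := (isCompact_closedBall r₀ ε |>.prod isCompact_uIcc).exists_bound_of_continuousOn
    (hG'.mono (prod_mono hεU (subset_univ (uIcc a b))))
  refine (hasDerivAt_integral_of_dominated_loc_of_deriv_le (bound := fun _ => C)
    (closedBall_mem_nhds r₀ hε) ?_ ?_ ?_ ?_ intervalIntegrable_const ?_).2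
  · filter_upwards [hU.mem_nhds hr₀] with r hr
    exact (continuous_of_continuousOn_prod_univ hG hr).aestronglyMeasurable
  · exact (continuous_of_continuousOn_prod_univ hG hr₀).intervalIntegrable a b
  · exact (continuous_of_continuousOn_prod_univ hG' hr₀).aestronglyMeasurable
  · exact ae_of_all _ fun θ hθ r hr => hC (r, θ) ⟨hr, uIoc_subset_uIcc hθ⟩
  · exact ae_of_all _ fun θ _ r hr => hder r (hεU hr) θ

section RadialEquation

variable {c d d' l : ℝ → ℝ} {R L : ℝ}

theorem abs_mul_le_of_radial_eq_zero (hd : ∀ r ∈ Icc 0 R, HasDerivAt d (d' r) r)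
    (heq : ∀ r ∈ Icc 0 R, r ^ 2 * d' r + r * d r = r ^ 2 * l r)
    (hl : ∀ r ∈ Icc 0 R, |l r| ≤ L) {r : ℝ} (hr : r ∈ Icc 0 R) : |r * d r| ≤ L * r ^ 2 := by
  have hsub : Icc 0 r ⊆ Icc 0 R := Icc_subset_Icc_right hr.2
  have hq : ∀ s ∈ Icc 0 r, HasDerivAt (fun r => r * d r) (d s + s * d' s) s := fun s hs =>
    ((hasDerivAt_id' s).mul (hd s (hsub hs))).congr_deriv (by ring)
  simpa using abs_sub_le_mul_pow_of_abs_deriv_le hr.1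
    (fun s hs => (hq s hs).continuousAt.continuousWithinAt)
    (fun s hs => hq s (Ioo_subset_Icc_self hs)) fun s hs => by
      have hs' := hsub (Ioo_subset_Icc_self hs)
      have : d s + s * d' s = s * l s := by
        apply mul_left_cancel₀ hs.1.ne'
        linear_combination heq s hs'
      rw [this, abs_mul, abs_of_pos hs.1, pow_one, mul_comm]
      exact mul_le_mul_of_nonneg_right (hl s hs') hs.1.le

theorem abs_sub_le_of_radial_eq_zero (hR : 0 ≤ R)
    (hc : ∀ r ∈ Icc 0 R, HasDerivAt c (d r) r) (hd : ∀ r ∈ Icc 0 R, HasDerivAt d (d' r) r)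
    (heq : ∀ r ∈ Icc 0 R, r ^ 2 * d' r + r * d r = r ^ 2 * l r)
    (hl : ∀ r ∈ Icc 0 R, |l r| ≤ L) : |c R - c 0| ≤ L * R ^ 2 := by
  refine abs_sub_le_mul_pow_of_abs_deriv_le (m := 1) hR
    (fun r hr => (hc r hr).continuousAt.continuousWithinAt)
    (fun r hr => hc r (Ioo_subset_Icc_self hr)) fun r hr => ?_
  have := abs_mul_le_of_radial_eq_zero hd heq hl (Ioo_subset_Icc_self hr)
  rw [abs_mul, abs_of_pos hr.1, sq] at this
  rw [pow_one]
  nlinarith [hr.1]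

-- `r² d - r c` is the Wronskian of `c` and the solution `r` of the homogeneous equation.
theorem abs_wronskian_le_of_radial_eq_one
    (hc : ∀ r ∈ Icc 0 R, HasDerivAt c (d r) r) (hd : ∀ r ∈ Icc 0 R, HasDerivAt d (d' r) r)
    (heq : ∀ r ∈ Icc 0 R, r ^ 2 * d' r + r * d r - c r = r ^ 2 * l r)
    (hl : ∀ r ∈ Icc 0 R, |l r| ≤ L) {r : ℝ} (hr : r ∈ Icc 0 R) :
    |r ^ 2 * d r - r * c r| ≤ L * r ^ 3 := by
  have hsub : Icc 0 r ⊆ Icc 0 R := Icc_subset_Icc_right hr.2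
  have hp : ∀ s ∈ Icc 0 r, HasDerivAt (fun r => r ^ 2 * d r - r * c r) (s ^ 2 * l s) s :=
    fun s hs => (((hasDerivAt_pow 2 s).mul (hd s (hsub hs))).sub
      ((hasDerivAt_id' s).mul (hc s (hsub hs)))).congr_deriv
        (by push_cast; linear_combination heq s (hsub hs))
  simpa using abs_sub_le_mul_pow_of_abs_deriv_le hr.1
    (fun s hs => (hp s hs).continuousAt.continuousWithinAt)
    (fun s hs => hp s (Ioo_subset_Icc_self hs)) fun s hs => by
      rw [abs_mul, abs_of_nonneg (sq_nonneg s), mul_comm]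
      exact mul_le_mul_of_nonneg_right (hl s (hsub (Ioo_subset_Icc_self hs))) (sq_nonneg s)

theorem abs_sub_mul_le_of_radial_eq_one (hR : 0 ≤ R)
    (hc : ∀ r ∈ Icc 0 R, HasDerivAt c (d r) r) (hd : ∀ r ∈ Icc 0 R, HasDerivAt d (d' r) r)
    (heq : ∀ r ∈ Icc 0 R, r ^ 2 * d' r + r * d r - c r = r ^ 2 * l r)
    (hl : ∀ r ∈ Icc 0 R, |l r| ≤ L) : |c R - R * d 0| ≤ 2 * L * R ^ 2 := by
  have hc0 : c 0 = 0 := by simpa using heq 0 ⟨le_rfl, hR⟩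
  have hd' : ∀ r ∈ Ioo 0 R, |d' r| ≤ 2 * L * r ^ 0 := fun r hr => by
    have hr' := Ioo_subset_Icc_self hr
    have h3 : 0 < r ^ 3 := pow_pos hr.1 3
    have hW := abs_wronskian_le_of_radial_eq_one hc hd heq hl hr'
    have : |d' r| * r ^ 3 ≤ 2 * L * r ^ 3 :=
      calc |d' r| * r ^ 3 = |r ^ 3 * l r - (r ^ 2 * d r - r * c r)| := by
            rw [← abs_of_pos h3, ← abs_mul, abs_of_pos h3]
            congr 1
            linear_combination r * heq r hr'
        _ ≤ |r ^ 3 * l r| + |r ^ 2 * d r - r * c r| := abs_sub _ _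
        _ ≤ r ^ 3 * L + L * r ^ 3 := by
            rw [abs_mul, abs_of_pos h3]
            gcongr
            exact hl r hr'
        _ = 2 * L * r ^ 3 := by ring
    rw [pow_zero, mul_one]
    exact le_of_mul_le_mul_right this h3
  have hdd : ∀ r ∈ Icc 0 R, |d r - d 0| ≤ 2 * L * r ^ (0 + 1) := fun r hr =>
    abs_sub_le_mul_pow_of_abs_deriv_le hr.1
      (fun s hs => (hd s (Icc_subset_Icc_right hr.2 hs)).continuousAt.continuousWithinAt)
      (fun s hs => hd s (Icc_subset_Icc_right hr.2 (Ioo_subset_Icc_self hs)))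
      fun s hs => hd' s (Ioo_subset_Ioo_right hr.2 hs)
  have hf : ∀ r ∈ Icc 0 R, HasDerivAt (fun r => c r - r * d 0) (d r - d 0) r := fun r hr =>
    ((hc r hr).sub ((hasDerivAt_id' r).mul_const (d 0))).congr_deriv (by ring)
  simpa [hc0] using abs_sub_le_mul_pow_of_abs_deriv_le (m := 1) hR
    (fun r hr => (hf r hr).continuousAt.continuousWithinAt)
    (fun r hr => hf r (Ioo_subset_Icc_self hr)) fun r hr => hdd r (Ioo_subset_Icc_self hr)

end RadialEquation

theorem integral_second_deriv_mul_eq {f f' f'' χ χ' : ℝ → ℝ} {a b k : ℝ}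
    (hf : ∀ θ, HasDerivAt f (f' θ) θ) (hf' : ∀ θ, HasDerivAt f' (f'' θ) θ)
    (hf'' : Continuous f'') (hχ : ∀ θ, HasDerivAt χ (χ' θ) θ)
    (hχ' : ∀ θ, HasDerivAt χ' (-k * χ θ) θ) (hfab : f b = f a) (hf'ab : f' b = f' a)
    (hχab : χ b = χ a) (hχ'ab : χ' b = χ' a) :
    ∫ θ in a..b, f'' θ * χ θ = -k * ∫ θ in a..b, f θ * χ θ := by
  have hfc : Continuous f := continuous_iff_continuousAt.2 fun θ => (hf θ).continuousAt
  have hχc : Continuous χ := continuous_iff_continuousAt.2 fun θ => (hχ θ).continuousAt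
  have hftc := integral_eq_sub_of_hasDerivAt (a := a) (b := b)
    (fun θ _ => (((hf' θ).mul (hχ θ)).sub ((hf θ).mul (hχ' θ))).congr_deriv
      (show _ = f'' θ * χ θ + k * (f θ * χ θ) by ring))
    (Continuous.intervalIntegrable (by fun_prop) _ _)
  rw [integral_add (Continuous.intervalIntegrable (by fun_prop) _ _)
    (Continuous.intervalIntegrable (by fun_prop) _ _), intervalIntegral.integral_const_mul] at hftc
  simp only [Pi.sub_apply, Pi.mul_apply, hfab, hf'ab, hχab, hχ'ab, sub_self] at hftc
  linarith

local notation "ℝ²" => EuclideanSpace ℝ (Fin 2)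

def polarDir (θ : ℝ) : ℝ² := cos θ • e₁ + sin θ • e₂

def polarDirPerp (θ : ℝ) : ℝ² := (-sin θ) • e₁ + cos θ • e₂

theorem norm_polarDir (θ : ℝ) : ‖polarDir θ‖ = 1 := by
  simp [polarDir, e₁, e₂, EuclideanSpace.norm_eq, Fin.sum_univ_two]

theorem continuous_polarDir : Continuous polarDir := by
  unfold polarDir; fun_prop

theorem continuous_polarDirPerp : Continuous polarDirPerp := by
  unfold polarDirPerp; fun_prop

theorem hasDerivAt_polarDir (θ : ℝ) : HasDerivAt polarDir (polarDirPerp θ) θ :=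
  ((hasDerivAt_cos θ).smul_const e₁).add ((hasDerivAt_sin θ).smul_const e₂)

theorem hasDerivAt_polarDirPerp (θ : ℝ) : HasDerivAt polarDirPerp (-polarDir θ) θ := by
  refine (((hasDerivAt_sin θ).neg.smul_const e₁).add
    ((hasDerivAt_cos θ).smul_const e₂)).congr_deriv ?_
  simp only [polarDir, neg_add, neg_smul]

theorem smul_polarDir_mem_ball {r : ℝ} (hr : r ∈ ball (0 : ℝ) 1) (θ : ℝ) :
    r • polarDir θ ∈ ball (0 : ℝ²) 1 := by
  simpa [norm_smul, norm_polarDir] using hr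

theorem apply_polarDir_add_apply_polarDirPerp (H : ℝ² →L[ℝ] ℝ² →L[ℝ] ℝ) (θ : ℝ) :
    H (polarDir θ) (polarDir θ) + H (polarDirPerp θ) (polarDirPerp θ) = H e₁ e₁ + H e₂ e₂ := by
  simp only [polarDir, polarDirPerp, map_add, map_smul, add_apply, smul_apply, smul_eq_mul]
  linear_combination (H e₁ e₁ + H e₂ e₂) * sin_sq_add_cos_sq θ

theorem opNorm_le_abs_apply_e₁_add_abs_apply_e₂ (D : ℝ² →L[ℝ] ℝ) : ‖D‖ ≤ |D e₁| + |D e₂| := by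
  refine D.opNorm_le_bound (by positivity) fun x => ?_
  have hx : x = x 0 • e₁ + x 1 • e₂ := by
    ext j; fin_cases j <;> simp [e₁, e₂]
  rw [hx, map_add, map_smul, map_smul, smul_eq_mul, smul_eq_mul, Real.norm_eq_abs, ← hx]
  calc |x 0 * D e₁ + x 1 * D e₂| ≤ |x 0| * |D e₁| + |x 1| * |D e₂| := by
        simpa only [abs_mul] using abs_add_le (x 0 * D e₁) (x 1 * D e₂)
    _ ≤ ‖x‖ * |D e₁| + ‖x‖ * |D e₂| := by
        gcongr <;> exact PiLp.norm_apply_le x _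
    _ = (|D e₁| + |D e₂|) * ‖x‖ := by ring

theorem lapW_eq_fderiv_fderiv {F : Type*} [NormedAddCommGroup F] [NormedSpace ℝ F]
    {s : Set ℝ²} (hs : IsOpen s) (f : ℝ² → F) {z : ℝ²} (hz : z ∈ s) :
    lapW s f z = fderiv ℝ (fderiv ℝ f) z e₁ e₁ + fderiv ℝ (fderiv ℝ f) z e₂ e₂ := by
  simp [lapW, iteratedFDerivWithin_of_isOpen 2 hs hz, iteratedFDeriv_two_apply]

section ContDiffOnOpen

variable {E F : Type*} [NormedAddCommGroup E] [NormedSpace ℝ E] [NormedAddCommGroup F]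
  [NormedSpace ℝ F] {s : Set E} {f : E → F} {z : E}

theorem _root_.ContDiffOn.hasFDerivAt_of_isOpen (hf : ContDiffOn ℝ 2 f s) (hs : IsOpen s)
    (hz : z ∈ s) : HasFDerivAt f (fderiv ℝ f z) z :=
  ((hf.differentiableOn (by norm_num) z hz).differentiableAt (hs.mem_nhds hz)).hasFDerivAt

theorem _root_.ContDiffOn.hasFDerivAt_fderiv_of_isOpen (hf : ContDiffOn ℝ 2 f s) (hs : IsOpen s)
    (hz : z ∈ s) : HasFDerivAt (fderiv ℝ f) (fderiv ℝ (fderiv ℝ f) z) z :=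
  (((hf.fderiv_of_isOpen hs (m := 1) (by norm_num)).differentiableOn one_ne_zero z
    hz).differentiableAt (hs.mem_nhds hz)).hasFDerivAt

theorem _root_.ContDiffOn.continuousOn_fderiv_fderiv_of_isOpen (hf : ContDiffOn ℝ 2 f s)
    (hs : IsOpen s) : ContinuousOn (fderiv ℝ (fderiv ℝ f)) s :=
  (hf.fderiv_of_isOpen hs (m := 1) (by norm_num)).continuousOn_fderiv_of_isOpen hs le_rfl

end ContDiffOnOpen

theorem continuousOn_comp_smul_polarDir {F : Type*} [TopologicalSpace F] {Φ : ℝ² → F}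
    (hΦ : ContinuousOn Φ (ball 0 1)) :
    ContinuousOn (fun p : ℝ × ℝ => Φ (p.1 • polarDir p.2)) (ball 0 1 ×ˢ univ) :=
  hΦ.comp (continuous_fst.smul (continuous_polarDir.comp continuous_snd)).continuousOn
    fun p hp => smul_polarDir_mem_ball hp.1 p.2

theorem continuous_comp_smul_polarDir {F : Type*} [TopologicalSpace F] {Φ : ℝ² → F}
    (hΦ : ContinuousOn Φ (ball 0 1)) {r : ℝ} (hr : r ∈ ball (0 : ℝ) 1) :
    Continuous fun θ => Φ (r • polarDir θ) :=
  hΦ.comp_continuous (continuous_polarDir.const_smul r) (smul_polarDir_mem_ball hr)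

theorem Icc_zero_half_subset_ball : Icc (0 : ℝ) (1 / 2) ⊆ ball 0 1 := fun r hr => by
  rw [mem_ball_zero_iff, Real.norm_eq_abs, abs_of_nonneg hr.1]
  linarith [hr.2]

section PolarMoments

variable {u : ℝ² → ℝ} {χ : ℝ → ℝ} {r : ℝ}

def circleMoment (f : ℝ² → ℝ) (χ : ℝ → ℝ) (r : ℝ) : ℝ :=
  ∫ θ in 0..2 * π, f (r • polarDir θ) * χ θ

def radialDerivMoment (u : ℝ² → ℝ) (χ : ℝ → ℝ) (r : ℝ) : ℝ :=
  ∫ θ in 0..2 * π, fderiv ℝ u (r • polarDir θ) (polarDir θ) * χ θ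

def radialDeriv2Moment (u : ℝ² → ℝ) (χ : ℝ → ℝ) (r : ℝ) : ℝ :=
  ∫ θ in 0..2 * π, fderiv ℝ (fderiv ℝ u) (r • polarDir θ) (polarDir θ) (polarDir θ) * χ θ

theorem hasDerivAt_circleMoment (hu : ContDiffOn ℝ 2 u (ball 0 1)) (hχ : Continuous χ)
    (hr : r ∈ ball (0 : ℝ) 1) : HasDerivAt (circleMoment u χ) (radialDerivMoment u χ r) r := by
  have hχ' := (hχ.comp continuous_snd).continuousOn (s := ball (0 : ℝ) 1 ×ˢ univ)
  have hdir := (continuous_polarDir.comp continuous_snd).continuousOn (s := ball (0 : ℝ) 1 ×ˢ univ)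
  refine hasDerivAt_intervalIntegral_of_continuousOn isOpen_ball
    (G := fun t θ => u (t • polarDir θ) * χ θ)
    (G' := fun t θ => fderiv ℝ u (t • polarDir θ) (polarDir θ) * χ θ)
    ((continuousOn_comp_smul_polarDir hu.continuousOn).mul hχ')
    (((continuousOn_comp_smul_polarDir (hu.continuousOn_fderiv_of_isOpen isOpen_ball
      (by norm_num))).clm_apply hdir).mul hχ') (fun t ht θ => ?_) hr
  exact ((hu.hasFDerivAt_of_isOpen isOpen_ball (smul_polarDir_mem_ball ht θ)).comp_hasDerivAt t
    ((hasDerivAt_id t).smul_const (polarDir θ))).mul_const (χ θ) |>.congr_deriv (by simp)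

theorem hasDerivAt_radialDerivMoment (hu : ContDiffOn ℝ 2 u (ball 0 1)) (hχ : Continuous χ)
    (hr : r ∈ ball (0 : ℝ) 1) :
    HasDerivAt (radialDerivMoment u χ) (radialDeriv2Moment u χ r) r := by
  have hχ' := (hχ.comp continuous_snd).continuousOn (s := ball (0 : ℝ) 1 ×ˢ univ)
  have hdir := (continuous_polarDir.comp continuous_snd).continuousOn (s := ball (0 : ℝ) 1 ×ˢ univ)
  refine hasDerivAt_intervalIntegral_of_continuousOn isOpen_ball
    (G := fun t θ => fderiv ℝ u (t • polarDir θ) (polarDir θ) * χ θ)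
    (G' := fun t θ => fderiv ℝ (fderiv ℝ u) (t • polarDir θ) (polarDir θ) (polarDir θ) * χ θ)
    (((continuousOn_comp_smul_polarDir (hu.continuousOn_fderiv_of_isOpen isOpen_ball
      (by norm_num))).clm_apply hdir).mul hχ')
    ((((continuousOn_comp_smul_polarDir (hu.continuousOn_fderiv_fderiv_of_isOpen isOpen_ball)).clm_apply
      hdir).clm_apply hdir).mul hχ') (fun t ht θ => ?_) hr
  have := (hu.hasFDerivAt_fderiv_of_isOpen isOpen_ball
    (smul_polarDir_mem_ball ht θ)).comp_hasDerivAt t ((hasDerivAt_id t).smul_const (polarDir θ))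
  exact ((this.clm_apply (hasDerivAt_const t (polarDir θ))).mul_const (χ θ)).congr_deriv (by simp)

theorem hasDerivAt_comp_smul_polarDir_angle (hu : ContDiffOn ℝ 2 u (ball 0 1))
    (hr : r ∈ ball (0 : ℝ) 1) (θ : ℝ) :
    HasDerivAt (fun θ => u (r • polarDir θ))
      (r * fderiv ℝ u (r • polarDir θ) (polarDirPerp θ)) θ := by
  have := (hu.hasFDerivAt_of_isOpen isOpen_ball (smul_polarDir_mem_ball hr θ)).comp_hasDerivAt θ
    ((hasDerivAt_polarDir θ).const_smul r)
  rwa [map_smul, smul_eq_mul] at this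

theorem hasDerivAt_fderiv_comp_smul_polarDir_angle (hu : ContDiffOn ℝ 2 u (ball 0 1))
    (hr : r ∈ ball (0 : ℝ) 1) (θ : ℝ) :
    HasDerivAt (fun θ => r * fderiv ℝ u (r • polarDir θ) (polarDirPerp θ))
      (r ^ 2 * fderiv ℝ (fderiv ℝ u) (r • polarDir θ) (polarDirPerp θ) (polarDirPerp θ)
        - r * fderiv ℝ u (r • polarDir θ) (polarDir θ)) θ := by
  have := (hu.hasFDerivAt_fderiv_of_isOpen isOpen_ball
    (smul_polarDir_mem_ball hr θ)).comp_hasDerivAt θ ((hasDerivAt_polarDir θ).const_smul r)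
  refine ((this.clm_apply (hasDerivAt_polarDirPerp θ)).const_mul r).congr_deriv ?_
  simp only [comp_apply, Pi.smul_apply, map_smul, map_neg, smul_apply, smul_eq_mul]
  ring

theorem integral_angularDeriv2_mul_eq (hu : ContDiffOn ℝ 2 u (ball 0 1))
    (hr : r ∈ ball (0 : ℝ) 1) {χ' : ℝ → ℝ} {k : ℝ} (hχ : ∀ θ, HasDerivAt χ (χ' θ) θ)
    (hχ' : ∀ θ, HasDerivAt χ' (-k * χ θ) θ) (hper : χ (2 * π) = χ 0)
    (hper' : χ' (2 * π) = χ' 0) :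
    ∫ θ in 0..2 * π,
        (r ^ 2 * fderiv ℝ (fderiv ℝ u) (r • polarDir θ) (polarDirPerp θ) (polarDirPerp θ)
          - r * fderiv ℝ u (r • polarDir θ) (polarDir θ)) * χ θ =
      -k * circleMoment u χ r := by
  have hdir : polarDir (2 * π) = polarDir 0 := by simp [polarDir]
  have hperp : polarDirPerp (2 * π) = polarDirPerp 0 := by simp [polarDirPerp]
  refine integral_second_deriv_mul_eq (hasDerivAt_comp_smul_polarDir_angle hu hr)
    (hasDerivAt_fderiv_comp_smul_polarDir_angle hu hr) ?_ hχ hχ' (by rw [hdir])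
    (by rw [hdir, hperp]) hper hper'
  have hD1 := continuous_comp_smul_polarDir
    (hu.continuousOn_fderiv_of_isOpen isOpen_ball (by norm_num)) hr
  have hD2 := continuous_comp_smul_polarDir
    (hu.continuousOn_fderiv_fderiv_of_isOpen isOpen_ball) hr
  exact (continuous_const.mul ((hD2.clm_apply continuous_polarDirPerp).clm_apply
    continuous_polarDirPerp)).sub (continuous_const.mul (hD1.clm_apply continuous_polarDir))

theorem sq_mul_circleMoment_lapW (hu : ContDiffOn ℝ 2 u (ball 0 1))
    (hr : r ∈ ball (0 : ℝ) 1) {χ' : ℝ → ℝ} {k : ℝ} (hχ : ∀ θ, HasDerivAt χ (χ' θ) θ)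
    (hχ' : ∀ θ, HasDerivAt χ' (-k * χ θ) θ) (hper : χ (2 * π) = χ 0)
    (hper' : χ' (2 * π) = χ' 0) :
    r ^ 2 * circleMoment (lapW (ball 0 1) u) χ r =
      r ^ 2 * radialDeriv2Moment u χ r + r * radialDerivMoment u χ r - k * circleMoment u χ r := by
  have hχc : Continuous χ := continuous_iff_continuousAt.2 fun θ => (hχ θ).continuousAt
  have hD1 := continuous_comp_smul_polarDir
    (hu.continuousOn_fderiv_of_isOpen isOpen_ball (by norm_num)) hr
  have hD2 := continuous_comp_smul_polarDir
    (hu.continuousOn_fderiv_fderiv_of_isOpen isOpen_ball) hr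
  have hF1 : Continuous fun θ => fderiv ℝ u (r • polarDir θ) (polarDir θ) * χ θ :=
    (hD1.clm_apply continuous_polarDir).mul hχc
  have hF2 : Continuous fun θ =>
      fderiv ℝ (fderiv ℝ u) (r • polarDir θ) (polarDir θ) (polarDir θ) * χ θ :=
    ((hD2.clm_apply continuous_polarDir).clm_apply continuous_polarDir).mul hχc
  have hW : Continuous fun θ =>
      fderiv ℝ (fderiv ℝ u) (r • polarDir θ) (polarDirPerp θ) (polarDirPerp θ) * χ θ :=
    ((hD2.clm_apply continuous_polarDirPerp).clm_apply continuous_polarDirPerp).mul hχc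
  have hlap : circleMoment (lapW (ball 0 1) u) χ r = radialDeriv2Moment u χ r +
      ∫ θ in 0..2 * π,
        fderiv ℝ (fderiv ℝ u) (r • polarDir θ) (polarDirPerp θ) (polarDirPerp θ) * χ θ := by
    rw [circleMoment, radialDeriv2Moment, ← integral_add (hF2.intervalIntegrable _ _)
      (hW.intervalIntegrable _ _)]
    refine integral_congr fun θ _ => ?_
    simp only [lapW_eq_fderiv_fderiv isOpen_ball u (smul_polarDir_mem_ball hr θ),
      ← apply_polarDir_add_apply_polarDirPerp _ θ]
    ring
  have hang := integral_angularDeriv2_mul_eq hu hr hχ hχ' hper hper'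
  rw [integral_congr (g := fun θ => r ^ 2 * (fderiv ℝ (fderiv ℝ u) (r • polarDir θ)
      (polarDirPerp θ) (polarDirPerp θ) * χ θ) - r * (fderiv ℝ u (r • polarDir θ) (polarDir θ) *
      χ θ)) fun θ _ => by ring,
    integral_sub ((hW.const_mul _).intervalIntegrable _ _)
      ((hF1.const_mul _).intervalIntegrable _ _),
    intervalIntegral.integral_const_mul, intervalIntegral.integral_const_mul] at hang
  rw [hlap, radialDerivMoment]
  linear_combination hang

theorem abs_circleMoment_le {f : ℝ² → ℝ} {M : ℝ} (hf : ∀ z ∈ ball (0 : ℝ²) 1, |f z| ≤ M)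
    (hχ : ∀ θ, |χ θ| ≤ 1) (hr : r ∈ ball (0 : ℝ) 1) : |circleMoment f χ r| ≤ 2 * π * M := by
  have hM : 0 ≤ M := (abs_nonneg _).trans (hf 0 (mem_ball_self one_pos))
  have := norm_integral_le_of_norm_le_const (a := 0) (b := 2 * π)
    (f := fun θ => f (r • polarDir θ) * χ θ) (C := M) fun θ _ => by
      rw [Real.norm_eq_abs, abs_mul]
      simpa using mul_le_mul (hf _ (smul_polarDir_mem_ball hr θ)) (hχ θ) (abs_nonneg _) hM
  rw [Real.norm_eq_abs, sub_zero, abs_of_pos two_pi_pos] at this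
  rw [circleMoment]
  linarith

theorem abs_circleMoment_le_neg_circleMoment_one (hu : ContinuousOn u (ball 0 1))
    (hneg : ∀ z ∈ ball (0 : ℝ²) 1, u z < 0) (hχ : ∀ θ, |χ θ| ≤ 1) (hr : r ∈ ball (0 : ℝ) 1) :
    |circleMoment u χ r| ≤ -circleMoment u (fun _ => 1) r := by
  have := norm_integral_le_of_norm_le two_pi_pos.le (μ := volume)
    (f := fun θ => u (r • polarDir θ) * χ θ) (g := fun θ => -u (r • polarDir θ))
    (ae_of_all _ fun θ _ => by
      rw [Real.norm_eq_abs, abs_mul, ← abs_of_neg (hneg _ (smul_polarDir_mem_ball hr θ))]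
      exact mul_le_of_le_one_right (abs_nonneg _) (hχ θ))
    ((continuous_comp_smul_polarDir hu hr).neg.intervalIntegrable _ _)
  simpa [circleMoment, intervalIntegral.integral_neg] using this

theorem circleMoment_zero (f : ℝ² → ℝ) (χ : ℝ → ℝ) :
    circleMoment f χ 0 = f 0 * ∫ θ in 0..2 * π, χ θ := by
  simp [circleMoment, intervalIntegral.integral_const_mul]

theorem radialDerivMoment_cos_zero : radialDerivMoment u cos 0 = π * fderiv ℝ u 0 e₁ := by
  rw [radialDerivMoment, integral_congr (g := fun θ => fderiv ℝ u 0 e₁ * cos θ ^ 2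
      + fderiv ℝ u 0 e₂ * (sin θ * cos θ)) fun θ _ => by
        simp only [zero_smul, polarDir, map_add, map_smul, smul_eq_mul]; ring,
    integral_add (Continuous.intervalIntegrable (by fun_prop) _ _)
      (Continuous.intervalIntegrable (by fun_prop) _ _),
    intervalIntegral.integral_const_mul, intervalIntegral.integral_const_mul, integral_cos_sq,
    integral_sin_mul_cos₁]
  simp only [cos_two_pi, sin_two_pi, cos_zero, sin_zero]
  ring

theorem radialDerivMoment_sin_zero : radialDerivMoment u sin 0 = π * fderiv ℝ u 0 e₂ := by
  rw [radialDerivMoment, integral_congr (g := fun θ => fderiv ℝ u 0 e₁ * (sin θ * cos θ)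
      + fderiv ℝ u 0 e₂ * sin θ ^ 2) fun θ _ => by
        simp only [zero_smul, polarDir, map_add, map_smul, smul_eq_mul]; ring,
    integral_add (Continuous.intervalIntegrable (by fun_prop) _ _)
      (Continuous.intervalIntegrable (by fun_prop) _ _),
    intervalIntegral.integral_const_mul, intervalIntegral.integral_const_mul, integral_sin_sq,
    integral_sin_mul_cos₁]
  simp only [cos_two_pi, sin_two_pi, cos_zero, sin_zero]
  ring

theorem neg_circleMoment_one_le (hu : ContDiffOn ℝ 2 u (ball 0 1))
    (hneg : ∀ z ∈ ball (0 : ℝ²) 1, u z < 0) {M : ℝ}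
    (hM : ∀ z ∈ ball (0 : ℝ²) 1, |lapW (ball 0 1) u z| ≤ M) :
    -circleMoment u (fun _ => 1) (1 / 2) ≤ 2 * π * |u 0| + π * M / 2 := by
  have h := abs_sub_le_of_radial_eq_zero (by norm_num)
    (fun r hr => hasDerivAt_circleMoment hu continuous_const (Icc_zero_half_subset_ball hr))
    (fun r hr => hasDerivAt_radialDerivMoment hu continuous_const (Icc_zero_half_subset_ball hr))
    (fun r hr => by
      linear_combination -(sq_mul_circleMoment_lapW hu (Icc_zero_half_subset_ball hr) (k := 0)
        (fun θ => hasDerivAt_const θ (1 : ℝ)) (fun θ => by simpa using hasDerivAt_const θ (0 : ℝ))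
        rfl rfl))
    (fun r hr => abs_circleMoment_le hM (fun _ => abs_one.le) (Icc_zero_half_subset_ball hr))
  rw [circleMoment_zero] at h
  rw [abs_of_neg (hneg 0 (mem_ball_self one_pos))]
  simp only [intervalIntegral.integral_const, sub_zero, smul_eq_mul, mul_one] at h
  linarith [(abs_le.mp h).1]

theorem abs_fderiv_apply_le (hu : ContDiffOn ℝ 2 u (ball 0 1))
    (hneg : ∀ z ∈ ball (0 : ℝ²) 1, u z < 0) {M : ℝ}
    (hM : ∀ z ∈ ball (0 : ℝ²) 1, |lapW (ball 0 1) u z| ≤ M) {χ' : ℝ → ℝ}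
    (hχ : ∀ θ, HasDerivAt χ (χ' θ) θ) (hχ' : ∀ θ, HasDerivAt χ' (-χ θ) θ)
    (hper : χ (2 * π) = χ 0) (hper' : χ' (2 * π) = χ' 0) (hχ1 : ∀ θ, |χ θ| ≤ 1) {v : ℝ²}
    (hv : radialDerivMoment u χ 0 = π * fderiv ℝ u 0 v) :
    |fderiv ℝ u 0 v| ≤ 4 * |u 0| + 3 * M := by
  have hχc : Continuous χ := continuous_iff_continuousAt.2 fun θ => (hχ θ).continuousAt
  have hmode := abs_sub_mul_le_of_radial_eq_one (by norm_num)
    (fun r hr => hasDerivAt_circleMoment hu hχc (Icc_zero_half_subset_ball hr))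
    (fun r hr => hasDerivAt_radialDerivMoment hu hχc (Icc_zero_half_subset_ball hr))
    (fun r hr => by
      linear_combination -(sq_mul_circleMoment_lapW hu (Icc_zero_half_subset_ball hr) (k := 1)
        hχ (fun θ => by simpa using hχ' θ) hper hper'))
    (fun r hr => abs_circleMoment_le hM hχ1 (Icc_zero_half_subset_ball hr))
  have hc := abs_circleMoment_le_neg_circleMoment_one hu.continuousOn hneg hχ1
    (Icc_zero_half_subset_ball ⟨by norm_num, le_rfl⟩)
  have hc₁ := neg_circleMoment_one_le hu hneg hM
  rw [hv] at hmode
  set c := circleMoment u χ (1 / 2)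
  have key : π / 2 * |fderiv ℝ u 0 v| ≤ π / 2 * (4 * |u 0| + 3 * M) :=
    calc π / 2 * |fderiv ℝ u 0 v| = |1 / 2 * (π * fderiv ℝ u 0 v)| := by
          rw [abs_mul, abs_mul, abs_of_pos pi_pos, abs_of_pos (by norm_num : (0 : ℝ) < 1 / 2)]
          ring
      _ ≤ |c| + |c - 1 / 2 * (π * fderiv ℝ u 0 v)| := by
          simpa using abs_sub c (c - 1 / 2 * (π * fderiv ℝ u 0 v))
      _ ≤ π / 2 * (4 * |u 0| + 3 * M) := by linarith
  exact le_of_mul_le_mul_left key (by positivity)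

end PolarMoments

end DiscLaplacian

open DiscLaplacian in
/-- If `u : D → ℝ` is `C²`, negative on `D`, and `|Δu| ≤ A·|u(0)|` on `D` for some `A > 0`,
then `|∇u(0)| ≤ C·|u(0)|` for a constant `C` depending only on `A`. -/
theorem stmt3 (A : ℝ) (hA : 0 < A) :
    ∃ C > 0, ∀ u : EuclideanSpace ℝ (Fin 2) → ℝ,
      ContDiffOn ℝ 2 u (ball 0 1) →
      (∀ z ∈ ball (0 : EuclideanSpace ℝ (Fin 2)) 1, u z < 0) →
      (∀ ζ ∈ ball (0 : EuclideanSpace ℝ (Fin 2)) 1, |lapW (ball 0 1) u ζ| ≤ A * |u 0|) →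
      ‖fderivWithin ℝ u (ball 0 1) 0‖ ≤ C * |u 0| := by
  refine ⟨8 + 6 * A, by positivity, fun u hu hneg hlap => ?_⟩
  have h₁ := abs_fderiv_apply_le hu hneg hlap hasDerivAt_cos
    (fun θ => (hasDerivAt_sin θ).neg) (by simp) (by simp) abs_cos_le_one
    radialDerivMoment_cos_zero
  have h₂ := abs_fderiv_apply_le hu hneg hlap hasDerivAt_sin
    (fun θ => by simpa using hasDerivAt_cos θ) (by simp) (by simp) abs_sin_le_one
    radialDerivMoment_sin_zero
  rw [fderivWithin_of_isOpen isOpen_ball (mem_ball_self one_pos)]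
  calc ‖fderiv ℝ u 0‖ ≤ |fderiv ℝ u 0 e₁| + |fderiv ℝ u 0 e₂| :=
        opNorm_le_abs_apply_e₁_add_abs_apply_e₂ _
    _ ≤ (8 + 6 * A) * |u 0| := by linarith
end
end

section
/- Let u : D → ℝⁿ be C² with u(0) = 0 and du(0) injective, with u(ζ) = (ξ, η, 0, …, 0) + O(|ζ|²) near 0. Then Δ(log|u|)(ζ) = O(1/|ζ|) as ζ → 0: there exist C, r₀ > 0 such that |Δ(log|u(ζ)|)| ≤ C/|ζ| for 0 < |ζ| < r₀. Consequently, for A sufficiently large the function ζ ↦ log|u(ζ)| + A|u(ζ)| satisfies Δ(log|u| + A|u|) ≥ 0 on a punctured neighborhood of 0. -/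
noncomputable section

open Metric

/-! Write `ρ = ‖u‖²`. For `ψ : ℝ → ℝ` one has `Δ(ψ ∘ ρ) = ψ''(ρ) |∇ρ|² + ψ'(ρ) Δρ`, hence
`Δ log ‖u‖ = (ρ Δρ - |∇ρ|²) / (2ρ²)` and `Δ ‖u‖ = (2ρ Δρ - |∇ρ|²) / (4ρ ‖u‖)`.
Since `u` agrees to second order with an isometric embedding of the plane,
`ρ = |ζ|² + O(|ζ|³)`, `|∇ρ|² = 4|ζ|² + O(|ζ|³)` and `Δρ = 4 + O(|ζ|)`. So the numerator of
`Δ log ‖u‖` is `O(|ζ|³)` against a denominator of order `|ζ|⁴`, whereas `Δ ‖u‖ ≥ 1 / (4|ζ|)`,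
which dominates `Δ log ‖u‖` once it is multiplied by a large constant. -/

open Filter Topology Asymptotics
open scoped RealInnerProductSpace

local notation "ℝ²" => EuclideanSpace ℝ (Fin 2)

section SecondDerivative

variable {E F : Type*} [NormedAddCommGroup E] [NormedSpace ℝ E]

theorem iteratedFDeriv_two_apply_of_hasFDerivAt [NormedAddCommGroup F] [NormedSpace ℝ F]
    {f : E → F} {P : E → E →L[ℝ] F} {P' : E →L[ℝ] E →L[ℝ] F} {z : E}
    (hf : ∀ᶠ x in 𝓝 z, HasFDerivAt f (P x) x) (hP : HasFDerivAt P P' z) (v w : E) :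
    iteratedFDeriv ℝ 2 f z ![v, w] = P' v w := by
  have hfP : fderiv ℝ f =ᶠ[𝓝 z] P := hf.mono fun x hx => hx.fderiv
  rw [iteratedFDeriv_two_apply, hfP.fderiv_eq, hP.fderiv]
  rfl

theorem ContDiffAt.hasFDerivAt_fderiv [NormedAddCommGroup F] [NormedSpace ℝ F] {f : E → F} {z : E}
    (hf : ContDiffAt ℝ 2 f z) : HasFDerivAt (fderiv ℝ f) (fderiv ℝ (fderiv ℝ f) z) z :=
  ((hf.fderiv_right (m := 1) le_rfl).differentiableAt one_ne_zero).hasFDerivAt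

theorem ContDiffAt.eventually_hasFDerivAt [NormedAddCommGroup F] [NormedSpace ℝ F] {f : E → F}
    {z : E} (hf : ContDiffAt ℝ 2 f z) : ∀ᶠ x in 𝓝 z, HasFDerivAt f (fderiv ℝ f x) x :=
  (hf.eventually (by simp)).mono fun _ hx => (hx.differentiableAt two_ne_zero).hasFDerivAt

theorem iteratedFDeriv_two_comp_apply {ρ : E → ℝ} {ψ ψ' : ℝ → ℝ} {ψ'' : ℝ} {z : E}
    (hρ : ContDiffAt ℝ 2 ρ z) (hψ : ∀ᶠ t in 𝓝 (ρ z), HasDerivAt ψ (ψ' t) t)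
    (hψ' : HasDerivAt ψ' ψ'' (ρ z)) (v w : E) :
    iteratedFDeriv ℝ 2 (ψ ∘ ρ) z ![v, w] =
      ψ'' * (fderiv ℝ ρ z v * fderiv ℝ ρ z w) + ψ' (ρ z) * iteratedFDeriv ℝ 2 ρ z ![v, w] := by
  have hψρ : ∀ᶠ x in 𝓝 z, HasDerivAt ψ (ψ' (ρ x)) (ρ x) :=
    hρ.continuousAt.eventually hψ
  have hf : ∀ᶠ x in 𝓝 z, HasFDerivAt (ψ ∘ ρ) (ψ' (ρ x) • fderiv ℝ ρ x) x :=
    (hψρ.and hρ.eventually_hasFDerivAt).mono fun x hx => hx.1.comp_hasFDerivAt x hx.2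
  have hP := (hψ'.comp_hasFDerivAt z (hρ.differentiableAt two_ne_zero).hasFDerivAt).smul
    hρ.hasFDerivAt_fderiv
  rw [iteratedFDeriv_two_apply_of_hasFDerivAt hf hP, iteratedFDeriv_two_apply]
  simp only [Function.comp_apply, add_apply, smul_apply,
    ContinuousLinearMap.smulRight_apply, smul_eq_mul, Matrix.cons_val_zero, Matrix.cons_val_one,
    Matrix.cons_val_fin_one]
  ring

theorem iteratedFDeriv_two_norm_sq_apply [NormedAddCommGroup F] [InnerProductSpace ℝ F]
    {u : E → F} {z : E} (hu : ContDiffAt ℝ 2 u z) (v w : E) :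
    iteratedFDeriv ℝ 2 (fun x => ‖u x‖ ^ 2) z ![v, w] =
      2 * (⟪fderiv ℝ u z v, fderiv ℝ u z w⟫ + ⟪u z, iteratedFDeriv ℝ 2 u z ![v, w]⟫) := by
  have hf := hu.eventually_hasFDerivAt.mono fun x hx => hx.norm_sq
  have hP : HasFDerivAt (fun x => 2 • (innerSL ℝ (u x)).comp (fderiv ℝ u x)) _ z :=
    (((innerSL ℝ).hasFDerivAt.comp z (hu.differentiableAt two_ne_zero).hasFDerivAt).clm_comp
      hu.hasFDerivAt_fderiv).const_smul 2
  rw [iteratedFDeriv_two_apply_of_hasFDerivAt hf hP, iteratedFDeriv_two_apply]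
  simp only [Function.comp_apply, smul_add, add_apply, smul_apply,
    ContinuousLinearMap.comp_apply, ContinuousLinearMap.compL_apply, ContinuousLinearMap.flip_apply,
    nsmul_eq_mul, Matrix.cons_val_zero, Matrix.cons_val_one, Matrix.cons_val_fin_one]
  rw [innerSL_apply_apply, innerSL_apply_apply]
  ring

end SecondDerivative

def gradNormSq (f : ℝ² → ℝ) (z : ℝ²) : ℝ := fderiv ℝ f z e₁ ^ 2 + fderiv ℝ f z e₂ ^ 2

section PlaneLaplacian

variable {F : Type*} [NormedAddCommGroup F]

theorem lapW_of_isOpen [NormedSpace ℝ F] {s : Set ℝ²} (hs : IsOpen s) {z : ℝ²} (hz : z ∈ s)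
    (f : ℝ² → F) : lapW s f z = lapW Set.univ f z := by
  simp only [lapW, iteratedFDerivWithin_univ, iteratedFDerivWithin_of_isOpen 2 hs hz]

theorem lapW_univ [NormedSpace ℝ F] (f : ℝ² → F) (z : ℝ²) :
    lapW Set.univ f z = iteratedFDeriv ℝ 2 f z ![e₁, e₁] + iteratedFDeriv ℝ 2 f z ![e₂, e₂] := by
  simp only [lapW, iteratedFDerivWithin_univ]

theorem lapW_add_const_mul {f g : ℝ² → ℝ} {z : ℝ²} (hf : ContDiffAt ℝ 2 f z)
    (hg : ContDiffAt ℝ 2 g z) (A : ℝ) :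
    lapW Set.univ (fun x => f x + A * g x) z = lapW Set.univ f z + A * lapW Set.univ g z := by
  have hAg : iteratedFDeriv ℝ 2 (fun x => A * g x) z = A • iteratedFDeriv ℝ 2 g z := by
    simpa only [smul_eq_mul] using iteratedFDeriv_const_smul_apply' (a := A) hg
  simp only [lapW_univ, fun_iteratedFDeriv_add_apply hf (contDiffAt_const.mul hg), hAg,
    add_apply, smul_apply, smul_eq_mul]
  ring

theorem lapW_comp {ρ : ℝ² → ℝ} {ψ ψ' : ℝ → ℝ} {ψ'' : ℝ} {z : ℝ²}
    (hρ : ContDiffAt ℝ 2 ρ z) (hψ : ∀ᶠ t in 𝓝 (ρ z), HasDerivAt ψ (ψ' t) t)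
    (hψ' : HasDerivAt ψ' ψ'' (ρ z)) :
    lapW Set.univ (ψ ∘ ρ) z = ψ'' * gradNormSq ρ z + ψ' (ρ z) * lapW Set.univ ρ z := by
  simp only [lapW_univ, gradNormSq, iteratedFDeriv_two_comp_apply hρ hψ hψ']
  ring

theorem lapW_norm_sq [InnerProductSpace ℝ F] {u : ℝ² → F} {z : ℝ²} (hu : ContDiffAt ℝ 2 u z) :
    lapW Set.univ (fun x => ‖u x‖ ^ 2) z =
      2 * (‖fderiv ℝ u z e₁‖ ^ 2 + ‖fderiv ℝ u z e₂‖ ^ 2 + ⟪u z, lapW Set.univ u z⟫) := by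
  simp only [lapW_univ, iteratedFDeriv_two_norm_sq_apply hu, inner_add_right,
    real_inner_self_eq_norm_sq]
  ring

variable [InnerProductSpace ℝ F] {u : ℝ² → F} {z : ℝ²}

theorem lapW_log_norm (hu : ContDiffAt ℝ 2 u z) (hz : u z ≠ 0) :
    lapW Set.univ (fun x => Real.log ‖u x‖) z =
      (‖u z‖ ^ 2 * lapW Set.univ (fun x => ‖u x‖ ^ 2) z - gradNormSq (fun x => ‖u x‖ ^ 2) z) /
        (2 * (‖u z‖ ^ 2) ^ 2) := by
  have hρ : 0 < ‖u z‖ ^ 2 := by positivity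
  have hψ : ∀ t, 0 < t → HasDerivAt (fun t => Real.log t / 2) (t⁻¹ / 2) t := fun t ht =>
    (Real.hasDerivAt_log ht.ne').div_const 2
  have hcomp : (fun x => Real.log ‖u x‖) = (fun t => Real.log t / 2) ∘ fun x => ‖u x‖ ^ 2 := by
    funext x
    simp only [Function.comp_apply, Real.log_pow]
    push_cast
    ring
  rw [hcomp, lapW_comp (hu.norm_sq ℝ) ((lt_mem_nhds hρ).mono hψ)
    ((hasDerivAt_inv hρ.ne').div_const 2)]
  field_simp
  ring

theorem lapW_norm (hu : ContDiffAt ℝ 2 u z) (hz : u z ≠ 0) :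
    lapW Set.univ (fun x => ‖u x‖) z =
      (2 * ‖u z‖ ^ 2 * lapW Set.univ (fun x => ‖u x‖ ^ 2) z - gradNormSq (fun x => ‖u x‖ ^ 2) z) /
        (4 * ‖u z‖ ^ 2 * ‖u z‖) := by
  have hρ : 0 < ‖u z‖ ^ 2 := by positivity
  have hψ : ∀ t, 0 < t → HasDerivAt Real.sqrt (2 * √t)⁻¹ t := fun t ht =>
    (Real.hasDerivAt_sqrt ht.ne').congr_deriv (one_div _)
  have hψ' : HasDerivAt (fun t => (2 * √t)⁻¹) _ (‖u z‖ ^ 2) :=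
    ((Real.hasDerivAt_sqrt hρ.ne').const_mul 2).inv (by positivity)
  have hcomp : (fun x => ‖u x‖) = Real.sqrt ∘ fun x => ‖u x‖ ^ 2 := by
    funext x
    simp only [Function.comp_apply, Real.sqrt_sq (norm_nonneg _)]
  rw [hcomp, lapW_comp (hu.norm_sq ℝ) ((lt_mem_nhds hρ).mono hψ) hψ']
  simp only [Real.sqrt_sq (norm_nonneg _)]
  field_simp
  ring

end PlaneLaplacian

section NormPowAsymptotics

variable {E : Type*} [NormedAddCommGroup E] {l : Filter E} {a b : ℕ}

theorem Asymptotics.IsBigO.mul_norm_pow {f g : E → ℝ} (hf : f =O[l] fun x => ‖x‖ ^ a)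
    (hg : g =O[l] fun x => ‖x‖ ^ b) : (fun x => f x * g x) =O[l] fun x => ‖x‖ ^ (a + b) := by
  simpa only [pow_add] using hf.mul hg

theorem Asymptotics.IsBigO.inner_norm_pow {F : Type*} [NormedAddCommGroup F]
    [InnerProductSpace ℝ F] {f g : E → F} (hf : f =O[l] fun x => ‖x‖ ^ a)
    (hg : g =O[l] fun x => ‖x‖ ^ b) : (fun x => ⟪f x, g x⟫) =O[l] fun x => ‖x‖ ^ (a + b) :=
  (isBigO_of_le l fun x => by simpa using abs_real_inner_le_norm (f x) (g x)).trans
    (hf.norm_left.mul_norm_pow hg.norm_left)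

theorem isBigO_norm_pow_of_le (hba : b ≤ a) :
    (fun x : E => ‖x‖ ^ a) =O[𝓝 0] fun x => ‖x‖ ^ b := by
  refine IsBigO.of_bound' ?_
  filter_upwards [Metric.closedBall_mem_nhds (0 : E) one_pos] with x hx
  rw [mem_closedBall_zero_iff] at hx
  simpa using pow_le_pow_of_le_one (norm_nonneg x) hx hba

theorem Asymptotics.IsBigO.sq_sub_sq_norm_pow {f g : E → ℝ}
    (hfg : (fun x => f x - g x) =O[𝓝 0] fun x => ‖x‖ ^ a) (hg : g =O[𝓝 0] fun x => ‖x‖ ^ b)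
    (hba : b ≤ a) : (fun x => f x ^ 2 - g x ^ 2) =O[𝓝 0] fun x => ‖x‖ ^ (a + b) := by
  have hsum : (fun x => f x - g x + 2 * g x) =O[𝓝 0] fun x => ‖x‖ ^ b :=
    (hfg.trans (isBigO_norm_pow_of_le hba)).add (hg.const_mul_left 2)
  refine (hfg.mul_norm_pow hsum).congr_left fun x => ?_
  ring

end NormPowAsymptotics

theorem hasFDerivAt_of_isBigO_sub_norm_sq {E F : Type*} [NormedAddCommGroup E] [NormedSpace ℝ E]
    [NormedAddCommGroup F] [NormedSpace ℝ F] {u : E → F} {L : E →L[ℝ] F}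
    (hO : (fun x => u x - L x) =O[𝓝 0] fun x => ‖x‖ ^ 2) : HasFDerivAt u L 0 := by
  have h := ((hO.congr_right fun x => by rw [sub_zero]).hasFDerivAt one_lt_two).add L.hasFDerivAt
  rw [zero_add] at h
  exact h.congr_of_eventuallyEq (.of_forall fun x => by simp)

section IsometricFirstOrder

variable {E F : Type*} [NormedAddCommGroup E] [InnerProductSpace ℝ E] [NormedAddCommGroup F]
  [InnerProductSpace ℝ F] {u : E → F} {D : E →ₗᵢ[ℝ] F}

theorem isBigO_fderiv_apply_sub (hu : ContDiffAt ℝ 2 u 0)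
    (hO : (fun x => u x - D x) =O[𝓝 0] fun x => ‖x‖ ^ 2) (e : E) :
    (fun x => fderiv ℝ u x e - D e) =O[𝓝 0] fun x => ‖x‖ ^ 1 := by
  have hD : fderiv ℝ u 0 = D.toContinuousLinearMap :=
    (hasFDerivAt_of_isBigO_sub_norm_sq (L := D.toContinuousLinearMap) hO).fderiv
  have h := hu.hasFDerivAt_fderiv.isBigO_sub
  rw [hD] at h
  refine (IsBigO.of_bound ‖e‖ ?_).trans (h.norm_right.congr_right fun x => by simp)
  filter_upwards with x
  simpa [mul_comm] using (fderiv ℝ u x - D.toContinuousLinearMap).le_opNorm e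

theorem isBigO_of_isBigO_sub_isometry
    (hO : (fun x => u x - D x) =O[𝓝 0] fun x => ‖x‖ ^ 2) :
    u =O[𝓝 0] fun x => ‖x‖ ^ 1 := by
  have hD : (fun x => D x) =O[𝓝 0] fun x => ‖x‖ ^ 1 := isBigO_of_le _ fun x => by simp
  simpa using (hO.trans (isBigO_norm_pow_of_le one_le_two)).add hD

theorem isBigO_norm_sq_sub_norm_sq (hO : (fun x => u x - D x) =O[𝓝 0] fun x => ‖x‖ ^ 2) :
    (fun x => ‖u x‖ ^ 2 - ‖x‖ ^ 2) =O[𝓝 0] fun x => ‖x‖ ^ 3 := by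
  have h : (fun x => ‖u x‖ - ‖x‖) =O[𝓝 0] fun x => ‖x‖ ^ 2 :=
    (isBigO_of_le _ fun x => by
      simpa [Real.norm_eq_abs] using abs_norm_sub_norm_le (u x) (D x)).trans hO
  exact h.sq_sub_sq_norm_pow (isBigO_of_le _ fun x => by simp) one_le_two

theorem isBigO_inner_fderiv_sub_inner (hu : ContDiffAt ℝ 2 u 0)
    (hO : (fun x => u x - D x) =O[𝓝 0] fun x => ‖x‖ ^ 2) (e : E) :
    (fun x => ⟪u x, fderiv ℝ u x e⟫ - ⟪x, e⟫) =O[𝓝 0] fun x => ‖x‖ ^ 2 := by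
  have hde := isBigO_fderiv_apply_sub hu hO e
  have hbounded : (fun x => fderiv ℝ u x e) =O[𝓝 0] fun x => ‖x‖ ^ 0 := by
    simpa using (hde.trans (isBigO_norm_pow_of_le zero_le_one)).add
      (isBigO_const_const (D e) one_ne_zero (𝓝 0))
  have hD : (fun x => D x) =O[𝓝 0] fun x => ‖x‖ ^ 1 := isBigO_of_le _ fun x => by simp
  refine ((hO.inner_norm_pow hbounded).add (hD.inner_norm_pow hde)).congr_left fun x => ?_
  rw [← D.inner_map_map x e, inner_sub_left, inner_sub_right]
  ring

theorem isBigO_norm_fderiv_sq_sub (hu : ContDiffAt ℝ 2 u 0)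
    (hO : (fun x => u x - D x) =O[𝓝 0] fun x => ‖x‖ ^ 2) (e : E) :
    (fun x => ‖fderiv ℝ u x e‖ ^ 2 - ‖e‖ ^ 2) =O[𝓝 0] fun x => ‖x‖ ^ 1 := by
  have h : (fun x => ‖fderiv ℝ u x e‖ - ‖e‖) =O[𝓝 0] fun x => ‖x‖ ^ 1 :=
    (isBigO_of_le _ fun x => by
      simpa [Real.norm_eq_abs] using abs_norm_sub_norm_le (fderiv ℝ u x e) (D e)).trans
      (isBigO_fderiv_apply_sub hu hO e)
  simpa using h.sq_sub_sq_norm_pow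
    (by simpa using isBigO_const_const ‖e‖ (one_ne_zero : (1 : ℝ) ≠ 0) (𝓝 (0 : E))) zero_le_one

end IsometricFirstOrder

section PlaneAsymptotics

variable {F : Type*} [NormedAddCommGroup F] [InnerProductSpace ℝ F] {u : ℝ² → F}
  {D : ℝ² →ₗᵢ[ℝ] F}

theorem norm_sq_eq_inner_e₁_sq_add_inner_e₂_sq (x : ℝ²) : ‖x‖ ^ 2 = ⟪x, e₁⟫ ^ 2 + ⟪x, e₂⟫ ^ 2 := by
  simp [EuclideanSpace.norm_sq_eq, Fin.sum_univ_two, e₁, e₂, EuclideanSpace.inner_single_right]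

theorem isBigO_gradNormSq_norm_sq_sub (hu : ContDiffAt ℝ 2 u 0)
    (hO : (fun x => u x - D x) =O[𝓝 0] fun x => ‖x‖ ^ 2) :
    (fun x => gradNormSq (fun y => ‖u y‖ ^ 2) x - 4 * ‖x‖ ^ 2) =O[𝓝 0] fun x => ‖x‖ ^ 3 := by
  have hinner (e : ℝ²) (he : ‖e‖ = 1) :
      (fun x => ⟪u x, fderiv ℝ u x e⟫ ^ 2 - ⟪x, e⟫ ^ 2) =O[𝓝 0] fun x => ‖x‖ ^ 3 :=
    (isBigO_inner_fderiv_sub_inner hu hO e).sq_sub_sq_norm_pow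
      (isBigO_of_le _ fun x => by simpa [he] using abs_real_inner_le_norm x e) one_le_two
  have he₁ : ‖e₁‖ = 1 := by simp [e₁]
  have he₂ : ‖e₂‖ = 1 := by simp [e₂]
  refine (((hinner e₁ he₁).add (hinner e₂ he₂)).const_mul_left 4).congr' ?_ .rfl
  filter_upwards [hu.eventually_hasFDerivAt] with x hx
  simp only [gradNormSq, hx.norm_sq.fderiv, norm_sq_eq_inner_e₁_sq_add_inner_e₂_sq x]
  simp [innerSL_apply_apply]
  ring

theorem isBigO_lapW_norm_sq_sub_four (hu : ContDiffAt ℝ 2 u 0)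
    (hO : (fun x => u x - D x) =O[𝓝 0] fun x => ‖x‖ ^ 2) :
    (fun x => lapW Set.univ (fun y => ‖u y‖ ^ 2) x - 4) =O[𝓝 0] fun x => ‖x‖ ^ 1 := by
  have hcont : ContinuousAt (lapW Set.univ u) 0 := by
    have h := (hu.iteratedFDeriv_right (m := 0) (i := 2) le_rfl).continuousAt
    simp only [funext (lapW_univ u)]
    exact ((continuous_eval_const _).continuousAt.comp h).add
      ((continuous_eval_const _).continuousAt.comp h)
  have hlap : lapW Set.univ u =O[𝓝 0] fun x => ‖x‖ ^ 0 := by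
    simpa using hcont.tendsto.isBigO_one ℝ
  have he₁ : ‖e₁‖ = 1 := by simp [e₁]
  have he₂ : ‖e₂‖ = 1 := by simp [e₂]
  refine ((((isBigO_norm_fderiv_sq_sub hu hO e₁).add (isBigO_norm_fderiv_sq_sub hu hO e₂)).add
    ((isBigO_of_isBigO_sub_isometry hO).inner_norm_pow hlap)).const_mul_left 2).congr' ?_ .rfl
  filter_upwards [hu.eventually (by simp)] with x hx
  rw [lapW_norm_sq hx, he₁, he₂]
  ring

end PlaneAsymptotics

/-- With `ρ = ‖u‖²`, `G = |∇ρ|²`, `L = Δρ`: for `k = 1` this is the numerator of `Δ log ‖u‖`,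
for `k = 2` the numerator of `Δ ‖u‖` minus its leading term `4‖x‖²`. -/
theorem isBigO_const_mul_mul_sub_sub {E : Type*} [NormedAddCommGroup E] {ρ G L : E → ℝ}
    (hρ : (fun x => ρ x - ‖x‖ ^ 2) =O[𝓝 0] fun x => ‖x‖ ^ 3)
    (hG : (fun x => G x - 4 * ‖x‖ ^ 2) =O[𝓝 0] fun x => ‖x‖ ^ 3)
    (hL : (fun x => L x - 4) =O[𝓝 0] fun x => ‖x‖ ^ 1) (k : ℝ) :
    (fun x => k * ρ x * L x - G x - 4 * (k - 1) * ‖x‖ ^ 2) =O[𝓝 0] fun x => ‖x‖ ^ 3 := by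
  have hL₀ : L =O[𝓝 0] fun x => ‖x‖ ^ 0 := by
    simpa using (hL.trans (isBigO_norm_pow_of_le zero_le_one)).add
      (isBigO_const_const (4 : ℝ) (one_ne_zero : (1 : ℝ) ≠ 0) (𝓝 (0 : E)))
  have hsq : (fun x => ‖x‖ ^ 2) =O[𝓝 (0 : E)] fun x => ‖x‖ ^ 2 := isBigO_refl _ _
  refine ((((hρ.mul_norm_pow hL₀).const_mul_left k).add
    ((hsq.mul_norm_pow hL).const_mul_left k)).sub hG).congr_left fun x => ?_
  ring

theorem Asymptotics.IsBigO.eventually_abs_le_norm_sq_div_two {E : Type*} [NormedAddCommGroup E]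
    {f : E → ℝ} (h : f =O[𝓝 0] fun x => ‖x‖ ^ 3) : ∀ᶠ x in 𝓝 0, |f x| ≤ ‖x‖ ^ 2 / 2 := by
  have hsmall : (fun x : E => ‖x‖ ^ 3) =o[𝓝 0] fun x => ‖x‖ ^ 2 := by
    simpa using isLittleO_pow_sub_pow_sub (0 : E) (show 2 < 3 by norm_num)
  filter_upwards [(h.trans_isLittleO hsmall).def (by norm_num : (0 : ℝ) < 1 / 2)] with x hx
  simpa [div_eq_inv_mul] using hx

theorem pos_of_abs_sub_sq_le {t ρ : ℝ} (ht : 0 < t) (hρ : |ρ - t ^ 2| ≤ t ^ 2 / 2) : 0 < ρ := by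
  have := (abs_le.mp hρ).1
  nlinarith

theorem abs_div_two_mul_sq_le {t ρ N c : ℝ} (ht : 0 < t) (hρ : |ρ - t ^ 2| ≤ t ^ 2 / 2)
    (hN : |N| ≤ c * t ^ 3) : |N / (2 * ρ ^ 2)| ≤ 2 * c / t := by
  have hρ₀ := pos_of_abs_sub_sq_le ht hρ
  have hc : 0 ≤ c := nonneg_of_mul_nonneg_left ((abs_nonneg N).trans hN) (by positivity)
  have hρt : t ^ 2 / 2 ≤ ρ := by linarith [(abs_le.mp hρ).1]
  rw [abs_div, abs_of_pos (show 0 < 2 * ρ ^ 2 by positivity), div_le_div_iff₀ (by positivity) ht]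
  calc |N| * t ≤ c * t ^ 3 * t := by gcongr
    _ = c * (4 * (t ^ 2 / 2) ^ 2) := by ring
    _ ≤ c * (4 * ρ ^ 2) := by gcongr
    _ = 2 * c * (2 * ρ ^ 2) := by ring

theorem one_div_four_mul_le_div {t m N : ℝ} (ht : 0 < t) (hm : 0 ≤ m)
    (hρ : |m ^ 2 - t ^ 2| ≤ t ^ 2 / 2) (hN : |N - 4 * t ^ 2| ≤ t ^ 2 / 2) :
    1 / (4 * t) ≤ N / (4 * m ^ 2 * m) := by
  have hm₀ : 0 < m := by
    have := pos_of_abs_sub_sq_le ht hρ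
    nlinarith
  have hm_sq : m ^ 2 ≤ 3 / 2 * t ^ 2 := by linarith [(abs_le.mp hρ).2]
  have hm_le : m ≤ 2 * t := by nlinarith
  have hN_ge : 7 / 2 * t ^ 2 ≤ N := by linarith [(abs_le.mp hN).1]
  rw [div_le_div_iff₀ (by positivity) (by positivity), one_mul]
  calc 4 * m ^ 2 * m ≤ 4 * (3 / 2 * t ^ 2) * (2 * t) := by gcongr
    _ ≤ N * (4 * t) := by nlinarith

section PlaneBounds

variable {F : Type*} [NormedAddCommGroup F] [InnerProductSpace ℝ F] {u : ℝ² → F}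
  {D : ℝ² →ₗᵢ[ℝ] F}

theorem eventually_ne_zero_of_isBigO_sub_isometry
    (hO : (fun x => u x - D x) =O[𝓝 0] fun x => ‖x‖ ^ 2) : ∀ᶠ x in 𝓝[≠] 0, u x ≠ 0 := by
  filter_upwards [self_mem_nhdsWithin,
    nhdsWithin_le_nhds (isBigO_norm_sq_sub_norm_sq hO).eventually_abs_le_norm_sq_div_two]
    with x hx hρx hux
  have := pos_of_abs_sub_sq_le (norm_pos_iff.mpr hx) hρx
  simp [hux] at this

theorem eventually_abs_lapW_log_norm_le (hu : ContDiffAt ℝ 2 u 0)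
    (hO : (fun x => u x - D x) =O[𝓝 0] fun x => ‖x‖ ^ 2) :
    ∃ C > 0, ∀ᶠ x in 𝓝[≠] 0, |lapW Set.univ (fun y => Real.log ‖u y‖) x| ≤ C / ‖x‖ := by
  have hρ := isBigO_norm_sq_sub_norm_sq hO
  obtain ⟨c, hc, hN⟩ := (isBigO_const_mul_mul_sub_sub hρ (isBigO_gradNormSq_norm_sq_sub hu hO)
    (isBigO_lapW_norm_sq_sub_four hu hO) 1).exists_pos
  refine ⟨2 * c, by positivity, ?_⟩
  filter_upwards [self_mem_nhdsWithin, eventually_ne_zero_of_isBigO_sub_isometry hO,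
    nhdsWithin_le_nhds (hu.eventually (by simp)),
    nhdsWithin_le_nhds hρ.eventually_abs_le_norm_sq_div_two, nhdsWithin_le_nhds hN.bound]
    with x hx hux0 hux hρx hNx
  rw [lapW_log_norm hux hux0]
  exact abs_div_two_mul_sq_le (norm_pos_iff.mpr hx) hρx (by simpa using hNx)

theorem eventually_one_div_four_mul_le_lapW_norm (hu : ContDiffAt ℝ 2 u 0)
    (hO : (fun x => u x - D x) =O[𝓝 0] fun x => ‖x‖ ^ 2) :
    ∀ᶠ x in 𝓝[≠] 0, 1 / (4 * ‖x‖) ≤ lapW Set.univ (fun y => ‖u y‖) x := by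
  have hρ := isBigO_norm_sq_sub_norm_sq hO
  have hN := isBigO_const_mul_mul_sub_sub hρ (isBigO_gradNormSq_norm_sq_sub hu hO)
    (isBigO_lapW_norm_sq_sub_four hu hO) 2
  filter_upwards [self_mem_nhdsWithin, eventually_ne_zero_of_isBigO_sub_isometry hO,
    nhdsWithin_le_nhds (hu.eventually (by simp)),
    nhdsWithin_le_nhds hρ.eventually_abs_le_norm_sq_div_two,
    nhdsWithin_le_nhds hN.eventually_abs_le_norm_sq_div_two]
    with x hx hux0 hux hρx hNx
  rw [lapW_norm hux hux0]
  exact one_div_four_mul_le_div (norm_pos_iff.mpr hx) (norm_nonneg _) hρx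
    (by convert hNx using 2; ring)

theorem exists_eventually_lapW_log_norm_add_mul_norm_nonneg (hu : ContDiffAt ℝ 2 u 0)
    (hO : (fun x => u x - D x) =O[𝓝 0] fun x => ‖x‖ ^ 2) :
    ∃ A₀, ∀ A, A₀ ≤ A → ∀ᶠ x in 𝓝[≠] 0,
      0 ≤ lapW Set.univ (fun y => Real.log ‖u y‖ + A * ‖u y‖) x := by
  obtain ⟨C, hC, hlog⟩ := eventually_abs_lapW_log_norm_le hu hO
  refine ⟨4 * C, fun A hA => ?_⟩
  filter_upwards [self_mem_nhdsWithin, hlog, eventually_one_div_four_mul_le_lapW_norm hu hO,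
    eventually_ne_zero_of_isBigO_sub_isometry hO, nhdsWithin_le_nhds (hu.eventually (by simp))]
    with x hx hlogx hnormx hux0 hux
  have ht : 0 < ‖x‖ := norm_pos_iff.mpr hx
  have hCA : C / ‖x‖ ≤ A * (1 / (4 * ‖x‖)) := by
    rw [mul_one_div, div_le_div_iff₀ ht (by positivity)]
    nlinarith
  rw [lapW_add_const_mul ((hux.norm ℝ hux0).log (norm_ne_zero_iff.mpr hux0)) (hux.norm ℝ hux0)]
  nlinarith [abs_le.mp hlogx, mul_le_mul_of_nonneg_left hnormx (hC.le.trans (by linarith) : 0 ≤ A)]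

end PlaneBounds

theorem norm_single_add_single {n : ℕ} {i j : Fin n} (hij : i ≠ j) (ζ : ℝ²) :
    ‖EuclideanSpace.single i (ζ 0) + EuclideanSpace.single j (ζ 1)‖ = ‖ζ‖ := by
  rw [← sq_eq_sq₀ (norm_nonneg _) (norm_nonneg _), EuclideanSpace.norm_sq_eq ζ,
    ← real_inner_self_eq_norm_sq]
  simp only [inner_add_left, inner_add_right, EuclideanSpace.inner_single_left,
    PiLp.single_apply, hij, hij.symm, if_true, if_false, Fin.sum_univ_two, Real.ringHom_apply,
    mul_zero, add_zero, zero_add, Real.norm_eq_abs, sq_abs]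
  ring

def planeIsometry {n : ℕ} (i j : Fin n) (hij : i ≠ j) : ℝ² →ₗᵢ[ℝ] EuclideanSpace ℝ (Fin n) where
  toFun ζ := EuclideanSpace.single i (ζ 0) + EuclideanSpace.single j (ζ 1)
  map_add' ζ ξ := by
    simp only [PiLp.add_apply, PiLp.single_add]
    abel
  map_smul' c ζ := by
    ext k
    simp only [PiLp.add_apply, PiLp.smul_apply, PiLp.single_apply, smul_eq_mul, RingHom.id_apply]
    split_ifs <;> ring
  norm_map' := norm_single_add_single hij

theorem exists_pos_forall_of_eventually_nhdsNE {E : Type*} [NormedAddCommGroup E] {p : E → Prop}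
    (h : ∀ᶠ x in 𝓝[≠] 0, p x) : ∃ r > 0, ∀ x, x ≠ 0 → ‖x‖ < r → p x := by
  obtain ⟨r, hr, h⟩ := Metric.eventually_nhds_iff.mp (eventually_nhdsWithin_iff.mp h)
  exact ⟨r, hr, fun x hx hxr => h (by simpa using hxr) hx⟩

/-- If `u : D → ℝⁿ` is `C²`, `u(0) = 0`, `du(0)` injective, and
`u(ζ) = (ξ,η,0,…,0) + O(|ζ|²)`, then `Δ(log|u|)(ζ) = O(1/|ζ|)` as `ζ → 0`; consequently
for `A` large enough `Δ(log|u| + A|u|) ≥ 0` on a punctured neighborhood of `0`. -/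
theorem stmt13 {n : ℕ} (hn : 2 ≤ n)
    (u : EuclideanSpace ℝ (Fin 2) → EuclideanSpace ℝ (Fin n))
    (hu : ContDiffOn ℝ 2 u (ball 0 1))
    (hO : ∃ C₀ : ℝ, ∀ ζ ∈ ball (0 : EuclideanSpace ℝ (Fin 2)) 1,
      ‖u ζ - (EuclideanSpace.single (⟨0, by omega⟩ : Fin n) (ζ 0) +
        EuclideanSpace.single (⟨1, by omega⟩ : Fin n) (ζ 1))‖ ≤ C₀ * ‖ζ‖ ^ 2) :
    (∃ C > 0, ∃ r₀ > 0, ∀ ζ : EuclideanSpace ℝ (Fin 2), ζ ≠ 0 → ‖ζ‖ < r₀ →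
      |lapW (ball 0 1 \ {0}) (fun w => Real.log ‖u w‖) ζ| ≤ C / ‖ζ‖) ∧
    (∃ A₀ : ℝ, ∀ A : ℝ, A₀ ≤ A → ∃ r₁ > 0,
      ∀ ζ : EuclideanSpace ℝ (Fin 2), ζ ≠ 0 → ‖ζ‖ < r₁ →
        0 ≤ lapW (ball 0 1 \ {0}) (fun w => Real.log ‖u w‖ + A * ‖u w‖) ζ) := by
  obtain ⟨C₀, hC₀⟩ := hO
  set D := planeIsometry (⟨0, by omega⟩ : Fin n) ⟨1, by omega⟩ (by simp [Fin.ext_iff])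
  have hO' : (fun ζ => u ζ - D ζ) =O[𝓝 0] fun ζ => ‖ζ‖ ^ 2 :=
    .of_bound C₀ (by
      filter_upwards [ball_mem_nhds 0 one_pos] with ζ hζ
      rw [norm_pow, norm_norm]
      exact hC₀ ζ hζ)
  have hu₀ : ContDiffAt ℝ 2 u 0 := hu.contDiffAt (ball_mem_nhds 0 one_pos)
  have hball : ∀ᶠ ζ in 𝓝[≠] (0 : ℝ²), ∀ f : ℝ² → ℝ,
      lapW (ball 0 1 \ {0}) f ζ = lapW Set.univ f ζ := by
    filter_upwards [self_mem_nhdsWithin, nhdsWithin_le_nhds (ball_mem_nhds 0 one_pos)]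
      with ζ hζ₀ hζ f
    exact lapW_of_isOpen (isOpen_ball.sdiff isClosed_singleton) ⟨hζ, hζ₀⟩ f
  obtain ⟨C, hC, hlog⟩ := eventually_abs_lapW_log_norm_le hu₀ hO'
  obtain ⟨A₀, hA₀⟩ := exists_eventually_lapW_log_norm_add_mul_norm_nonneg hu₀ hO'
  refine ⟨⟨C, hC, ?_⟩, A₀, fun A hA => ?_⟩
  · refine exists_pos_forall_of_eventually_nhdsNE ?_
    filter_upwards [hlog, hball] with ζ h hζ
    rwa [hζ]
  · refine exists_pos_forall_of_eventually_nhdsNE ?_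
    filter_upwards [hA₀ A hA, hball] with ζ h hζ
    rwa [hζ]
end
end

section
/- Let Φ : ℝⁿ → [0, e^A] be continuous, f : D → ℝⁿ continuous on the disc rD of radius r < 1, with f(0) = w. Suppose v(z) := Φ(f(z))/|z|² is subharmonic on rD ∖ {0} and limsup_{z→0} v(z) = |ξ|²/(c·α²) for constants c > 0, α > 0 and a vector ξ. Then |ξ|²/(c·α²) ≤ e^A/r², and hence α ≥ r·|ξ|·(e^A·c)^{−1/2}. -/
noncomputable section

open Metric

section AuxLemmas
open Filter Real

abbrev E2 := EuclideanSpace ℝ (Fin 2)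

lemma line_hasDerivAt (z e : E2) (t : ℝ) : HasDerivAt (fun s : ℝ => z + s • e) e t := by
  simpa using ((hasDerivAt_id t).smul_const e).const_add z

lemma key_deriv {g : E2 → ℝ} {U : Set E2} (hU : IsOpen U)
    (hg : ContDiffOn ℝ 2 g U) {z : E2} (hz : z ∈ U) (e : E2) :
    ∃ g' : ℝ → ℝ, (∀ᶠ t in nhds (0:ℝ), HasDerivAt (fun s : ℝ => g (z + s • e)) (g' t) t) ∧
      HasDerivAt g' (iteratedFDeriv ℝ 2 g z ![e, e]) 0 := by
  have hcl : Continuous fun t : ℝ => z + t • e := by continuity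
  have hval : z + (0:ℝ) • e = z := by simp
  have hmem : ∀ᶠ t in nhds (0:ℝ), z + t • e ∈ U := by
    have := hcl.continuousAt (x := (0:ℝ))
    have h2 : U ∈ nhds (z + (0:ℝ) • e) := by rw [hval]; exact hU.mem_nhds hz
    exact this.preimage_mem_nhds h2
  refine ⟨fun t => fderiv ℝ g (z + t • e) e, ?_, ?_⟩
  · filter_upwards [hmem] with t ht
    have hd : DifferentiableAt ℝ g (z + t • e) :=
      ((hg.differentiableOn (by norm_num)) (z + t • e) ht).differentiableAt (hU.mem_nhds ht)
    exact hd.hasFDerivAt.comp_hasDerivAt t (line_hasDerivAt z e t)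
  · have h2 : ContDiffAt ℝ 2 g z := hg.contDiffAt (hU.mem_nhds hz)
    have h1 : ContDiffAt ℝ 1 (fderiv ℝ g) z := h2.fderiv_right (by norm_num)
    have hfd : HasFDerivAt (fderiv ℝ g) (fderiv ℝ (fderiv ℝ g) z) z :=
      (h1.differentiableAt (by norm_num)).hasFDerivAt
    have hfd' : HasFDerivAt (fderiv ℝ g) (fderiv ℝ (fderiv ℝ g) z) (z + (0:ℝ) • e) := by
      rw [hval]; exact hfd
    have hline : HasDerivAt (fun t : ℝ => fderiv ℝ g (z + t • e))
        (fderiv ℝ (fderiv ℝ g) z e) 0 := hfd'.comp_hasDerivAt 0 (line_hasDerivAt z e 0)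
    have happ := hline.clm_apply (hasDerivAt_const (0:ℝ) e)
    have : iteratedFDeriv ℝ 2 g z ![e, e] = fderiv ℝ (fderiv ℝ g) z e e := by
      rw [iteratedFDeriv_two_apply]; simp
    rw [this]
    simpa using happ

lemma second_test {φ g' : ℝ → ℝ} {d : ℝ}
    (h1 : ∀ᶠ t in nhds (0:ℝ), HasDerivAt φ (g' t) t)
    (h2 : HasDerivAt g' d 0) (hmax : IsLocalMax φ 0) : d ≤ 0 := by
  by_contra hlt
  push_neg at hlt
  have hg0 : g' 0 = 0 := by
    have h10 : HasDerivAt φ (g' 0) 0 := h1.self_of_nhds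
    rw [← h10.deriv]
    exact hmax.deriv_eq_zero
  -- slope of g' tends to d > 0
  have ht : Tendsto (slope g' 0) (nhdsWithin 0 {(0:ℝ)}ᶜ) (nhds d) :=
    hasDerivAt_iff_tendsto_slope.1 h2
  have ht' : Tendsto (slope g' 0) (nhdsWithin 0 (Set.Ioi 0)) (nhds d) :=
    ht.mono_left (nhdsWithin_mono _ (fun x hx => ne_of_gt hx))
  have hpos : ∀ᶠ t in nhdsWithin 0 (Set.Ioi 0), 0 < slope g' 0 t :=
    ht'.eventually (eventually_gt_nhds hlt)
  -- extract radii
  obtain ⟨ρ₁, hρ₁, hball⟩ := Metric.eventually_nhds_iff.1 (h1.and hmax)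
  obtain ⟨u, hu, hIoc⟩ := mem_nhdsGT_iff_exists_Ioc_subset.1 hpos
  set t₀ : ℝ := min (ρ₁ / 2) u with ht₀
  have ht₀pos : 0 < t₀ := lt_min (by linarith) hu
  have hsub : ∀ t ∈ Set.Icc (0:ℝ) t₀, dist t 0 < ρ₁ := by
    intro t ⟨h0t, htt⟩
    rw [Real.dist_eq, sub_zero, abs_of_nonneg h0t]
    calc t ≤ t₀ := htt
    _ ≤ ρ₁ / 2 := min_le_left _ _
    _ < ρ₁ := by linarith
  have hco : ContinuousOn φ (Set.Icc 0 t₀) := fun t ht =>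
    ((hball (hsub t ht)).1.differentiableAt.continuousAt).continuousWithinAt
  have hmono : StrictMonoOn φ (Set.Icc 0 t₀) := by
    apply strictMonoOn_of_deriv_pos (convex_Icc 0 t₀) hco
    intro t ht
    rw [interior_Icc] at ht
    have hdist : dist t 0 < ρ₁ := hsub t ⟨ht.1.le, ht.2.le⟩
    have hder : HasDerivAt φ (g' t) t := (hball hdist).1
    rw [hder.deriv]
    have htIoc : t ∈ Set.Ioc 0 u := ⟨ht.1, ht.2.le.trans (min_le_right _ _)⟩
    have h0 : 0 < slope g' 0 t := hIoc htIoc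
    have hslope : slope g' 0 t = g' t / t := by
      rw [slope_def_field, hg0]; ring_nf
    rw [hslope] at h0
    exact (div_pos_iff.1 h0).resolve_right (fun h => absurd ht.1 (not_lt.2 h.2.le)) |>.1
  have hlt2 : φ 0 < φ t₀ :=
    hmono (Set.left_mem_Icc.2 ht₀pos.le) (Set.right_mem_Icc.2 ht₀pos.le) ht₀pos
  have : φ t₀ ≤ φ 0 := by
    have hdist : dist t₀ 0 < ρ₁ := hsub t₀ ⟨ht₀pos.le, le_rfl⟩
    exact (hball hdist).2
  linarith

/-- the squared norm as a polynomial in coordinates -/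
def qfn : E2 → ℝ := fun y => (y 0) ^ 2 + (y 1) ^ 2

lemma qfn_eq (y : E2) : qfn y = ‖y‖ ^ 2 := by
  rw [EuclideanSpace.norm_eq, Real.sq_sqrt (by positivity)]
  simp [qfn, Fin.sum_univ_two, sq_abs]

lemma contDiff_qfn : ContDiff ℝ 2 qfn := by
  have h0 : ContDiff ℝ 2 fun y : E2 => y 0 := by exact (EuclideanSpace.proj (0 : Fin 2) : E2 →L[ℝ] ℝ).contDiff
  have h1 : ContDiff ℝ 2 fun y : E2 => y 1 := by exact (EuclideanSpace.proj (1 : Fin 2) : E2 →L[ℝ] ℝ).contDiff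
  exact (h0.pow 2).add (h1.pow 2)

lemma qfn_pos {y : E2} (hy : y ≠ 0) : 0 < qfn y := by
  rw [qfn_eq]
  exact pow_pos (norm_pos_iff.2 hy) 2

lemma isLocalMax_line {h : E2 → ℝ} {z : E2} (hm : IsLocalMax h z) (e : E2) :
    IsLocalMax (fun t : ℝ => h (z + t • e)) 0 := by
  have hcl : Continuous fun t : ℝ => z + t • e := by continuity
  have hval : z + (0:ℝ) • e = z := by simp
  have htd : Tendsto (fun t : ℝ => z + t • e) (nhds 0) (nhds z) := by
    have := hcl.continuousAt (x := (0:ℝ))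
    rwa [ContinuousAt, hval] at this
  have := htd.eventually hm
  refine this.mono fun t ht => ?_
  simpa [hval] using ht

lemma max_principle {a b : ℝ} (ha : 0 < a) (hab : a < b) {U : Set E2} (hU : IsOpen U)
    (hKU : ∀ y : E2, a ≤ ‖y‖ → ‖y‖ ≤ b → y ∈ U)
    {h : E2 → ℝ} (hh : ContDiffOn ℝ 2 h U)
    (hlap : ∀ y ∈ U, a < ‖y‖ → ‖y‖ < b →
      0 < iteratedFDeriv ℝ 2 h y ![e₁, e₁] + iteratedFDeriv ℝ 2 h y ![e₂, e₂])
    {M : ℝ} (hbd : ∀ y : E2, ‖y‖ = a ∨ ‖y‖ = b → h y ≤ M)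
    {z : E2} (hza : a ≤ ‖z‖) (hzb : ‖z‖ ≤ b) : h z ≤ M := by
  set K : Set E2 := closedBall 0 b \ ball 0 a with hK
  have hmemK : ∀ y : E2, y ∈ K ↔ a ≤ ‖y‖ ∧ ‖y‖ ≤ b := by
    intro y
    simp [hK, mem_closedBall_zero_iff, mem_ball_zero_iff, not_lt, and_comm]
  have hKsub : K ⊆ U := fun y hy => hKU y ((hmemK y).1 hy).1 ((hmemK y).1 hy).2
  have hKc : IsCompact K := (isCompact_closedBall 0 b).diff isOpen_ball
  have hKne : K.Nonempty := ⟨z, (hmemK z).2 ⟨hza, hzb⟩⟩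
  have hcont : ContinuousOn h K := (hh.continuousOn).mono hKsub
  obtain ⟨z₀, hz₀K, hz₀max⟩ := hKc.exists_isMaxOn hKne hcont
  obtain ⟨hz₀a, hz₀b⟩ := (hmemK z₀).1 hz₀K
  have hzle : h z ≤ h z₀ := hz₀max ((hmemK z).2 ⟨hza, hzb⟩)
  by_cases hbdy : ‖z₀‖ = a ∨ ‖z₀‖ = b
  · exact hzle.trans (hbd z₀ hbdy)
  · exfalso
    push_neg at hbdy
    have hz₀a' : a < ‖z₀‖ := lt_of_le_of_ne hz₀a (Ne.symm hbdy.1)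
    have hz₀b' : ‖z₀‖ < b := lt_of_le_of_ne hz₀b hbdy.2
    set O : Set E2 := ball 0 b \ closedBall 0 a with hO
    have hOopen : IsOpen O := isOpen_ball.sdiff Metric.isClosed_closedBall
    have hz₀O : z₀ ∈ O := by
      simp only [hO, Set.mem_diff, mem_ball_zero_iff, mem_closedBall_zero_iff, not_le]
      exact ⟨hz₀b', hz₀a'⟩
    have hOK : O ⊆ K := by
      intro y hy
      simp only [hO, Set.mem_diff, mem_ball_zero_iff, mem_closedBall_zero_iff, not_le] at hy
      exact (hmemK y).2 ⟨hy.2.le, hy.1.le⟩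
    have hloc : IsLocalMax h z₀ :=
      hz₀max.isLocalMax (Filter.mem_of_superset (hOopen.mem_nhds hz₀O) hOK)
    have hz₀U : z₀ ∈ U := hKsub hz₀K
    have hkey : ∀ e : E2, iteratedFDeriv ℝ 2 h z₀ ![e, e] ≤ 0 := by
      intro e
      obtain ⟨g', hg1, hg2⟩ := key_deriv hU hh hz₀U e
      exact second_test hg1 hg2 (isLocalMax_line hloc e)
    have := hlap z₀ hz₀U hz₀a' hz₀b'
    have h1 := hkey e₁
    have h2 := hkey e₂
    linarith

lemma contDiffOn_barrier {U : Set E2} (hU0 : ∀ y ∈ U, y ≠ (0:E2)) {v : E2 → ℝ}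
    (hv : ContDiffOn ℝ 2 v U) (ε η : ℝ) :
    ContDiffOn ℝ 2 (fun x => v x + ε * Real.log (qfn x) + η * qfn x) U := by
  have hlog : ContDiffOn ℝ 2 (fun x => Real.log (qfn x)) U := by
    intro x hx
    exact (ContDiffAt.log contDiff_qfn.contDiffAt (ne_of_gt (qfn_pos (hU0 x hx)))).contDiffWithinAt
  exact (hv.add (contDiffOn_const.mul hlog)).add (contDiffOn_const.mul (contDiff_qfn.contDiffOn))

lemma lap_barrier_dir {U : Set E2} (hU : IsOpen U) {v : E2 → ℝ}
    (hv : ContDiffOn ℝ 2 v U) {y : E2} (hy : y ∈ U)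
    (ε η : ℝ) (e : E2) (p m : ℝ)
    (hqu : ∀ t : ℝ, qfn (y + t • e) = (p + t) ^ 2 + m)
    (hQ : qfn y ≠ 0)
    (hh : ContDiffOn ℝ 2 (fun x => v x + ε * Real.log (qfn x) + η * qfn x) U) :
    iteratedFDeriv ℝ 2 (fun x => v x + ε * Real.log (qfn x) + η * qfn x) y ![e, e]
      = iteratedFDeriv ℝ 2 v y ![e, e]
        + ε * ((2 * qfn y - (2 * p) * (2 * p)) / (qfn y) ^ 2) + η * 2 := by
  obtain ⟨gv, hgv, hgv'⟩ := key_deriv hU hv hy e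
  obtain ⟨gh, hgh, hgh'⟩ := key_deriv hU hh hy e
  set u : ℝ → ℝ := fun t => (p + t) ^ 2 + m with hu_def
  have hu : ∀ t, HasDerivAt u (2 * (p + t)) t := by
    intro t
    have h1 : HasDerivAt (fun s : ℝ => p + s) 1 t := (hasDerivAt_id t).const_add p
    have h2 := (h1.pow 2).add_const m
    simpa [hu_def, mul_comm] using h2
  have hu0 : u 0 = qfn y := by
    have := hqu 0
    simp only [zero_smul, add_zero] at this
    simp [hu_def, this]
  have huC : Continuous u := by fun_prop
  have hune : ∀ᶠ t in nhds (0:ℝ), u t ≠ 0 :=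
    (huC.continuousAt).eventually_ne (by rw [hu0]; exact hQ)
  have hlog : ∀ᶠ t in nhds (0:ℝ), HasDerivAt (fun s => Real.log (u s)) (2 * (p + t) / u t) t := by
    filter_upwards [hune] with t ht
    exact (hu t).log ht
  set gs : ℝ → ℝ := fun t => gv t + ε * (2 * (p + t) / u t) + η * (2 * (p + t)) with hgs_def
  have hgs : ∀ᶠ t in nhds (0:ℝ), HasDerivAt
      (fun s : ℝ => v (y + s • e) + ε * Real.log (qfn (y + s • e)) + η * qfn (y + s • e))
      (gs t) t := by
    filter_upwards [hgv, hlog] with t h1 h2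
    have hfeq : (fun s => Real.log (qfn (y + s • e))) = fun s => Real.log (u s) :=
      funext fun s => by rw [hqu s]
    have h2' : HasDerivAt (fun s => Real.log (qfn (y + s • e))) (2 * (p + t) / u t) t := by
      rw [hfeq]; exact h2
    have h3 : HasDerivAt (fun s => qfn (y + s • e)) (2 * (p + t)) t := by
      have hfeq' : (fun s : ℝ => qfn (y + s • e)) = u := funext hqu
      rw [hfeq']; exact hu t
    exact (h1.add (h2'.const_mul ε)).add (h3.const_mul η)
  have hnum : HasDerivAt (fun t : ℝ => 2 * (p + t)) 2 0 := by
    simpa using ((hasDerivAt_id (0:ℝ)).const_add p).const_mul 2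
  have hdiv : HasDerivAt (fun t => 2 * (p + t) / u t)
      ((2 * u 0 - 2 * (p + 0) * (2 * (p + 0))) / (u 0) ^ 2) 0 :=
    hnum.div (hu 0) (hu0 ▸ hQ)
  have hgsd : HasDerivAt gs
      (iteratedFDeriv ℝ 2 v y ![e, e]
        + ε * ((2 * u 0 - 2 * (p + 0) * (2 * (p + 0))) / (u 0) ^ 2) + η * 2) 0 :=
    (hgv'.add (hdiv.const_mul ε)).add (hnum.const_mul η)
  have hequ : gh =ᶠ[nhds (0:ℝ)] gs := by
    filter_upwards [hgh, hgs] with t h1 h2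
    exact h1.unique h2
  have hfin : HasDerivAt gh
      (iteratedFDeriv ℝ 2 v y ![e, e]
        + ε * ((2 * u 0 - 2 * (p + 0) * (2 * (p + 0))) / (u 0) ^ 2) + η * 2) 0 :=
    hgsd.congr_of_eventuallyEq hequ
  have := hgh'.unique hfin
  rw [this, hu0]
  ring_nf

lemma coord_line (y z : E2) (t : ℝ) (i : Fin 2) : (y + t • z) i = y i + t * z i := rfl

lemma e₁_apply (i : Fin 2) : e₁ i = if i = 0 then 1 else 0 := by
  simp [e₁, EuclideanSpace.single_apply]
lemma e₂_apply (i : Fin 2) : e₂ i = if i = 1 then 1 else 0 := by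
  simp [e₂, EuclideanSpace.single_apply]

lemma lap_barrier {U : Set E2} (hU : IsOpen U) (hU0 : ∀ y ∈ U, y ≠ (0:E2)) {v : E2 → ℝ}
    (hv : ContDiffOn ℝ 2 v U) (ε η : ℝ) {y : E2} (hy : y ∈ U) :
    iteratedFDeriv ℝ 2 (fun x => v x + ε * Real.log (qfn x) + η * qfn x) y ![e₁, e₁]
      + iteratedFDeriv ℝ 2 (fun x => v x + ε * Real.log (qfn x) + η * qfn x) y ![e₂, e₂]
    = (iteratedFDeriv ℝ 2 v y ![e₁, e₁] + iteratedFDeriv ℝ 2 v y ![e₂, e₂]) + η * 4 := by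
  have hy0 : y ≠ 0 := hU0 y hy
  have hQ : qfn y ≠ 0 := ne_of_gt (qfn_pos hy0)
  have hh := contDiffOn_barrier hU0 hv ε η
  have hq1 : ∀ t : ℝ, qfn (y + t • e₁) = (y 0 + t) ^ 2 + (y 1) ^ 2 := by
    intro t
    simp [qfn, coord_line, e₁_apply]
  have hq2 : ∀ t : ℝ, qfn (y + t • e₂) = (y 1 + t) ^ 2 + (y 0) ^ 2 := by
    intro t
    simp only [qfn, coord_line, e₂_apply]
    norm_num
    ring
  have hd1 := lap_barrier_dir hU hv hy ε η e₁ (y 0) ((y 1) ^ 2) hq1 hQ hh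
  have hd2 := lap_barrier_dir hU hv hy ε η e₂ (y 1) ((y 0) ^ 2) hq2 hQ hh
  rw [hd1, hd2]
  have hQval : qfn y = (y 0) ^ 2 + (y 1) ^ 2 := rfl
  have hsum : (2 * qfn y - 2 * y 0 * (2 * y 0)) / (qfn y) ^ 2
      + (2 * qfn y - 2 * y 1 * (2 * y 1)) / (qfn y) ^ 2 = 0 := by
    rw [← add_div, hQval]
    have h2 : ((y 0) ^ 2 + (y 1) ^ 2) ≠ 0 := by rw [← hQval]; exact hQ
    field_simp
    ring
  have hz : ε * ((2 * qfn y - 2 * y 0 * (2 * y 0)) / (qfn y) ^ 2)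
      + ε * ((2 * qfn y - 2 * y 1 * (2 * y 1)) / (qfn y) ^ 2) = 0 := by
    rw [← mul_add, hsum, mul_zero]
  linarith [hz]

lemma pointwise_bound {v : E2 → ℝ} {r r' B EA : ℝ} (hr0 : 0 < r) (hr' : 0 < r') (hr'r : r' < r)
    (hEA : 0 < EA)
    (hsm : ContDiffOn ℝ 2 v (ball (0:E2) r \ {0}))
    (hsub : ∀ z ∈ ball (0:E2) r \ {0},
      0 ≤ iteratedFDeriv ℝ 2 v z ![e₁, e₁] + iteratedFDeriv ℝ 2 v z ![e₂, e₂])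
    (hvle : ∀ z : E2, z ≠ 0 → v z ≤ EA / ‖z‖ ^ 2)
    {δ₀ : ℝ} (hδ₀ : 0 < δ₀)
    (hB : ∀ z : E2, z ∈ ball (0:E2) r \ {0} → ‖z‖ < δ₀ → v z ≤ B)
    {z : E2} (hz0 : z ≠ 0) (hzr' : ‖z‖ < r') :
    v z ≤ EA / r' ^ 2 := by
  set U : Set E2 := ball (0:E2) r \ {0} with hU_def
  have hUopen : IsOpen U := isOpen_ball.sdiff isClosed_singleton
  have hU0 : ∀ y ∈ U, y ≠ (0:E2) := fun y hy => hy.2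
  have hznorm : 0 < ‖z‖ := norm_pos_iff.2 hz0
  refine le_of_forall_pos_le_add ?_
  intro ε hε
  set cz : ℝ := Real.log r' - Real.log ‖z‖ with hcz_def
  have hcz : 0 < cz := sub_pos.2 (Real.log_lt_log hznorm hzr')
  set ε₁ : ℝ := ε / (4 * cz) with hε₁_def
  have hε₁ : 0 < ε₁ := by positivity
  set η : ℝ := ε / (2 * r' ^ 2) with hη_def
  have hη : 0 < η := by positivity
  set δ : ℝ := min (min (δ₀ / 2) ‖z‖) (r' * Real.exp ((EA / r' ^ 2 - B) / (2 * ε₁))) with hδ_def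
  have hδpos : 0 < δ := lt_min (lt_min (by linarith) hznorm) (by positivity)
  have hδz : δ ≤ ‖z‖ := le_trans (min_le_left _ _) (min_le_right _ _)
  have hδδ₀ : δ < δ₀ := lt_of_le_of_lt (le_trans (min_le_left _ _) (min_le_left _ _)) (by linarith)
  have hδr' : δ < r' := lt_of_le_of_lt hδz hzr'
  set h : E2 → ℝ := fun x => v x + ε₁ * Real.log (qfn x) + η * qfn x with hh_def
  set M : ℝ := EA / r' ^ 2 + ε₁ * (2 * Real.log r') + η * r' ^ 2 with hM_def
  have hKU : ∀ y : E2, δ ≤ ‖y‖ → ‖y‖ ≤ r' → y ∈ U := by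
    intro y h1 h2
    refine ⟨mem_ball_zero_iff.2 (lt_of_le_of_lt h2 hr'r), ?_⟩
    simp only [Set.mem_singleton_iff]
    intro hy0
    rw [hy0, norm_zero] at h1
    linarith
  have hhC : ContDiffOn ℝ 2 h U := contDiffOn_barrier hU0 hsm ε₁ η
  have hlap : ∀ y ∈ U, δ < ‖y‖ → ‖y‖ < r' →
      0 < iteratedFDeriv ℝ 2 h y ![e₁, e₁] + iteratedFDeriv ℝ 2 h y ![e₂, e₂] := by
    intro y hy _ _
    rw [hh_def, lap_barrier hUopen hU0 hsm ε₁ η hy]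
    have := hsub y hy
    linarith
  have hbd : ∀ y : E2, ‖y‖ = δ ∨ ‖y‖ = r' → h y ≤ M := by
    intro y hy
    rcases hy with hy | hy
    · -- inner circle
      have hy0 : y ≠ 0 := by
        intro h0; rw [h0, norm_zero] at hy; exact absurd hy.symm (ne_of_gt hδpos)
      have hyU : y ∈ U := hKU y (le_of_eq hy.symm) (le_of_lt (hy ▸ hδr'))
      have hvB : v y ≤ B := hB y hyU (hy ▸ hδδ₀)
      have hqy : qfn y = δ ^ 2 := by rw [qfn_eq, hy]
      have hlogq : Real.log (qfn y) = 2 * Real.log δ := by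
        rw [hqy, Real.log_pow]; push_cast; ring
      have hlogδ : Real.log δ ≤ Real.log r' + (EA / r' ^ 2 - B) / (2 * ε₁) := by
        calc Real.log δ ≤ Real.log (r' * Real.exp ((EA / r' ^ 2 - B) / (2 * ε₁))) :=
              Real.log_le_log hδpos (min_le_right _ _)
        _ = Real.log r' + (EA / r' ^ 2 - B) / (2 * ε₁) := by
              rw [Real.log_mul (ne_of_gt hr') (Real.exp_ne_zero _), Real.log_exp]
      have key : ε₁ * (2 * Real.log δ) ≤ ε₁ * (2 * Real.log r') + (EA / r' ^ 2 - B) := by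
        have h2 : ε₁ * (2 * Real.log δ) ≤ ε₁ * (2 * (Real.log r' + (EA / r' ^ 2 - B) / (2 * ε₁))) := by
          apply mul_le_mul_of_nonneg_left _ hε₁.le
          linarith
        calc ε₁ * (2 * Real.log δ)
            ≤ ε₁ * (2 * (Real.log r' + (EA / r' ^ 2 - B) / (2 * ε₁))) := h2
        _ = ε₁ * (2 * Real.log r') + (EA / r' ^ 2 - B) := by
              field_simp
      have hηq : η * qfn y ≤ η * r' ^ 2 := by
        rw [hqy]
        apply mul_le_mul_of_nonneg_left _ hη.le
        have := pow_le_pow_left₀ hδpos.le hδr'.le 2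
        linarith
      rw [hh_def, hM_def]
      simp only
      rw [hlogq]
      linarith
    · -- outer circle
      have hy0 : y ≠ 0 := by
        intro h0; rw [h0, norm_zero] at hy; exact absurd hy.symm (ne_of_gt hr')
      have hv' : v y ≤ EA / r' ^ 2 := by
        have := hvle y hy0
        rwa [hy] at this
      have hqy : qfn y = r' ^ 2 := by rw [qfn_eq, hy]
      have hlogq : Real.log (qfn y) = 2 * Real.log r' := by
        rw [hqy, Real.log_pow]; push_cast; ring
      rw [hh_def, hM_def]
      simp only
      rw [hlogq, hqy]
      linarith
  have hmain : h z ≤ M :=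
    max_principle hδpos hδr' hUopen hKU hhC hlap hbd hδz hzr'.le
  -- unpack
  have hqz : qfn z = ‖z‖ ^ 2 := qfn_eq z
  have hlogqz : Real.log (qfn z) = 2 * Real.log ‖z‖ := by
    rw [hqz, Real.log_pow]; push_cast; ring
  rw [hh_def, hM_def] at hmain
  simp only at hmain
  rw [hlogqz, hqz] at hmain
  -- v z ≤ EA/r'² + 2 ε₁ cz + η (r'² - ‖z‖²) ≤ EA/r'² + ε/2 + ε/2
  have h2a : ε₁ * (2 * Real.log r') - ε₁ * (2 * Real.log ‖z‖) = 2 * ε₁ * cz := by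
    rw [hcz_def]; ring
  have h2b : 2 * ε₁ * cz = ε / 2 := by
    rw [hε₁_def]; field_simp; ring
  have h2c : η * r' ^ 2 = ε / 2 := by
    rw [hη_def]; field_simp
  have hz2 : 0 ≤ η * ‖z‖ ^ 2 := by positivity
  linarith


lemma norm_e₁ : ‖e₁‖ = 1 := by
  rw [e₁, EuclideanSpace.norm_single, norm_one]

end AuxLemmas

open Filter Real in
/-- The key analytic step for the lower bound on the Kobayashi–Royden metric: if
`v(z) = Φ(f(z))/|z|²` is subharmonic on the punctured disc of radius `r < 1` with
`0 ≤ Φ ≤ e^A`, and `limsup_{z→0} v(z) = |ξ|²/(c·α²)`, then `|ξ|²/(c·α²) ≤ e^A/r²`, hence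
`α ≥ r·|ξ|·(e^A·c)^{−1/2}`. -/
theorem stmt14 {n : ℕ} (Φ : EuclideanSpace ℝ (Fin n) → ℝ) (A : ℝ)
    (hΦc : Continuous Φ) (hΦ : ∀ p, 0 ≤ Φ p ∧ Φ p ≤ exp A)
    (f : EuclideanSpace ℝ (Fin 2) → EuclideanSpace ℝ (Fin n))
    (r : ℝ) (hr0 : 0 < r) (hr : r < 1)
    (hf : ContinuousOn f (closedBall 0 r)) (w : EuclideanSpace ℝ (Fin n)) (hf0 : f 0 = w)
    (hsm : ContDiffOn ℝ 2 (fun z => Φ (f z) / ‖z‖ ^ 2) (ball 0 r \ {0}))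
    (hsub : ∀ z ∈ ball (0 : EuclideanSpace ℝ (Fin 2)) r \ {0},
      0 ≤ lapW (ball 0 r \ {0}) (fun z => Φ (f z) / ‖z‖ ^ 2) z)
    (c α : ℝ) (hc : 0 < c) (hα : 0 < α) (ξ : EuclideanSpace ℝ (Fin n))
    (hlim : limsup (fun z => Φ (f z) / ‖z‖ ^ 2)
        (nhdsWithin (0 : EuclideanSpace ℝ (Fin 2)) (ball 0 r \ {0})) =
      ‖ξ‖ ^ 2 / (c * α ^ 2)) :
    ‖ξ‖ ^ 2 / (c * α ^ 2) ≤ exp A / r ^ 2 ∧ r * ‖ξ‖ / Real.sqrt (exp A * c) ≤ α := by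
  have hEA : 0 < exp A := Real.exp_pos A
  suffices hfirst : ‖ξ‖ ^ 2 / (c * α ^ 2) ≤ exp A / r ^ 2 by
    refine ⟨hfirst, ?_⟩
    have h1 : ‖ξ‖ ^ 2 * r ^ 2 ≤ exp A * (c * α ^ 2) := by
      rw [div_le_div_iff₀ (by positivity) (by positivity)] at hfirst
      linarith
    have hsq : (r * ‖ξ‖) ^ 2 ≤ (Real.sqrt (exp A * c) * α) ^ 2 := by
      rw [mul_pow, mul_pow, Real.sq_sqrt (by positivity)]
      nlinarith [h1]
    have hle : r * ‖ξ‖ ≤ Real.sqrt (exp A * c) * α := by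
      have h2 := Real.sqrt_le_sqrt hsq
      rwa [Real.sqrt_sq (by positivity), Real.sqrt_sq (by positivity)] at h2
    rw [div_le_iff₀ (Real.sqrt_pos.2 (by positivity))]
    linarith [hle]
  rcases eq_or_ne ξ 0 with hξ | hξ
  · rw [hξ, norm_zero]
    norm_num
    positivity
  set s : Set E2 := ball (0 : E2) r \ {0} with hs_def
  have hsOpen : IsOpen s := isOpen_ball.sdiff isClosed_singleton
  set v : E2 → ℝ := fun z => Φ (f z) / ‖z‖ ^ 2 with hv_def
  have hsub' : ∀ z ∈ s,
      0 ≤ iteratedFDeriv ℝ 2 v z ![e₁, e₁] + iteratedFDeriv ℝ 2 v z ![e₂, e₂] := by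
    intro z hz
    have hlw := hsub z hz
    unfold lapW at hlw
    rwa [iteratedFDerivWithin_of_isOpen 2 hsOpen hz] at hlw
  have hvnonneg : ∀ z : E2, 0 ≤ v z := by
    intro z
    have := (hΦ (f z)).1
    rw [hv_def]
    positivity
  have hvle : ∀ z : E2, z ≠ 0 → v z ≤ exp A / ‖z‖ ^ 2 := by
    intro z hz
    have hnormpos : (0:ℝ) < ‖z‖ := norm_pos_iff.2 hz
    show Φ (f z) / ‖z‖ ^ 2 ≤ exp A / ‖z‖ ^ 2
    exact div_le_div_of_nonneg_right (hΦ (f z)).2 (by positivity)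
  -- the filter is nontrivial
  have h0cl : (0 : E2) ∈ closure s := by
    rw [Metric.mem_closure_iff]
    intro ε hε
    set t : ℝ := min (ε / 2) (r / 2) with ht_def
    have htpos : 0 < t := lt_min (by linarith) (by linarith)
    refine ⟨t • e₁, ⟨?_, ?_⟩, ?_⟩
    · rw [mem_ball_zero_iff, norm_smul, norm_e₁, mul_one, Real.norm_eq_abs,
        abs_of_pos htpos]
      calc t ≤ r / 2 := min_le_right _ _
      _ < r := by linarith
    · simp only [Set.mem_singleton_iff]
      intro hcon
      have : ‖t • e₁‖ = 0 := by rw [hcon, norm_zero]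
      rw [norm_smul, norm_e₁, mul_one, Real.norm_eq_abs, abs_of_pos htpos] at this
      linarith
    · rw [dist_zero_left, norm_smul, norm_e₁, mul_one, Real.norm_eq_abs, abs_of_pos htpos]
      calc t ≤ ε / 2 := min_le_left _ _
      _ < ε := by linarith
  haveI hne : (nhdsWithin (0 : E2) s).NeBot := mem_closure_iff_nhdsWithin_neBot.1 h0cl
  set L : ℝ := ‖ξ‖ ^ 2 / (c * α ^ 2) with hL_def
  have hL : 0 < L := by
    have := norm_pos_iff.2 hξ
    rw [hL_def]
    positivity
  set S : Set ℝ := {a : ℝ | ∀ᶠ z in nhdsWithin (0 : E2) s, v z ≤ a} with hS_def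
  have hlim' : sInf S = L := by
    rw [← hlim, limsup_eq]
  have hbdd : BddBelow S := by
    refine ⟨0, fun a ha => ?_⟩
    have ha' : ∀ᶠ z in nhdsWithin (0 : E2) s, v z ≤ a := ha
    obtain ⟨z, hz⟩ := ha'.exists
    exact le_trans (hvnonneg z) hz
  have hSne : S.Nonempty := by
    by_contra hcon
    rw [Set.not_nonempty_iff_eq_empty] at hcon
    rw [hcon, Real.sInf_empty] at hlim'
    exact absurd hlim'.symm (ne_of_gt hL)
  obtain ⟨a, haS, halt⟩ := (csInf_lt_iff hbdd hSne).1 (by rw [hlim']; exact lt_add_one L)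
  have hBev : ∀ᶠ z in nhdsWithin (0 : E2) s, v z ≤ L + 1 := by
    have haS' : ∀ᶠ z in nhdsWithin (0 : E2) s, v z ≤ a := haS
    exact haS'.mono fun z hz => hz.trans halt.le
  obtain ⟨δ₀, hδ₀pos, hδ₀⟩ := Metric.mem_nhdsWithin_iff.1 hBev
  have hB : ∀ z : E2, z ∈ s → ‖z‖ < δ₀ → v z ≤ L + 1 := by
    intro z hz hnorm
    exact hδ₀ ⟨mem_ball_zero_iff.2 hnorm, hz⟩
  have claim : ∀ r' : ℝ, 0 < r' → r' < r → L ≤ exp A / r' ^ 2 := by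
    intro r' h1 h2
    have hS' : (exp A / r' ^ 2) ∈ S := by
      refine Metric.mem_nhdsWithin_iff.2 ⟨r', h1, ?_⟩
      rintro z ⟨hz1, hz2⟩
      have hz0 : z ≠ 0 := hz2.2
      have hzr' : ‖z‖ < r' := by rwa [mem_ball_zero_iff] at hz1
      exact pointwise_bound hr0 h1 h2 hEA hsm hsub' hvle hδ₀pos hB hz0 hzr'
    rw [← hlim']
    exact csInf_le hbdd hS'
  have hmul : ∀ᶠ r' in nhdsWithin r (Set.Iio r), L * r' ^ 2 ≤ exp A := by
    filter_upwards [Ioo_mem_nhdsLT_of_mem (show r ∈ Set.Ioc 0 r from ⟨hr0, le_rfl⟩)] with r' hr'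
    have := claim r' hr'.1 hr'.2
    rw [le_div_iff₀ (pow_pos hr'.1 2)] at this
    linarith
  have htend : Tendsto (fun r' : ℝ => L * r' ^ 2) (nhdsWithin r (Set.Iio r)) (nhds (L * r ^ 2)) :=
    ((continuous_const.mul (continuous_pow 2)).tendsto r).mono_left nhdsWithin_le_nhds
  haveI : (nhdsWithin r (Set.Iio r)).NeBot := by infer_instance
  have hfinal : L * r ^ 2 ≤ exp A := le_of_tendsto htend hmul
  rw [le_div_iff₀ (by positivity)]
  exact hfinal
end
end
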